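/- arXiv:2201.12791 — 3 statements merged into one kernel-verified Lean document; each statement's English description precedes it below -/
import Mathlib

section
/- Let n ≥ 1, θ ∈ [0,2] and K ∈ 𝒦_{0,θ}. For every k ∈ ℕ let u_k ∈ 𝒞_{θ,K} and let f_k be bounded and continuous on B₁, with Au_k = f_k pointwise in B₁. Assume: (i) f_k converges uniformly in B₁ to a function f; (ii) u_k converges to a function u ∈ 𝒞_{θ,K} in the norm of L^∞(B₄) if θ = 0, of C^θ(B₄) if θ ∈ (0,1), of C^{0,1}(B₄) if θ = 1, of C^{1,θ−1}(B₄) if θ ∈ (1,2), and of C^{1,1}(B₄) if θ = 2; (iii) for every x ∈ B₁, lim_{k→+∞} ∫_{ℝⁿ\B₃} |u(y)−u_k(y)| |K(x,y)| dy = 0. Then Au = f pointwise in B₁. -/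
open MeasureTheory Metric Filter
open scoped ENNReal NNReal

noncomputable section

/-- `ℝⁿ` as Euclidean space. -/
abbrev En (n : ℕ) : Type := EuclideanSpace ℝ (Fin n)

/-- Partial derivative in the `i`-th coordinate direction. -/
noncomputable def pderivE {n : ℕ} (i : Fin n) (f : En n → ℝ) : En n → ℝ :=
  fun x => fderiv ℝ f x (EuclideanSpace.single i 1)

/-- Iterated partial derivatives along a list of coordinate directions. -/
noncomputable def mderivList {n : ℕ} : List (Fin n) → (En n → ℝ) → En n → ℝ
  | [], f => f
  | i :: l, f => pderivE i (mderivList l f)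

/-- The mixed partial derivative `∂^α` associated with a multi-index `α`. -/
noncomputable def mderiv {n : ℕ} (α : Fin n → ℕ) (f : En n → ℝ) : En n → ℝ :=
  mderivList ((List.finRange n).flatMap fun i => List.replicate (α i) i) f

/-- The (finite) set of multi-indices of total degree exactly `m`. -/
def multiIdxEq (n m : ℕ) : Finset (Fin n → ℕ) :=
  (Fintype.piFinset fun _ : Fin n => Finset.range (m + 1)).filter fun α => ∑ i, α i = m

/-- The (finite) set of multi-indices of total degree at most `m - 1` (i.e. `< m`). -/
def multiIdxLt (n m : ℕ) : Finset (Fin n → ℕ) :=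
  (Fintype.piFinset fun _ : Fin n => Finset.range (m + 1)).filter fun α => ∑ i, α i < m

/-- `P` is a polynomial function on `ℝⁿ` of degree at most `m - 1`
(for `m = 0` this forces `P = 0`). -/
def IsPolyDegLt (n m : ℕ) (P : En n → ℝ) : Prop :=
  ∃ c : (Fin n → ℕ) → ℝ, ∀ x : En n, P x = ∑ α ∈ multiIdxLt n m, c α * ∏ i, x i ^ α i

/-- The integro-differential operator `Au(x) = ∫ (u(x)-u(y)) K(x,y) dy`. -/
noncomputable def opA {n : ℕ} (K : En n → En n → ℝ) (u : En n → ℝ) (x : En n) : ℝ :=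
  ∫ y, (u x - u y) * K x y

/-- Multiplication by the cut-off `χ_R` (indicator of the ball `B_R`). -/
noncomputable def chiCut {n : ℕ} (R : ℝ) (u : En n → ℝ) : En n → ℝ :=
  (ball (0 : En n) R).indicator u

/-- Bounded and continuous on `B₁`. -/
def BddContOn (n : ℕ) (f : En n → ℝ) : Prop :=
  ContinuousOn f (ball (0 : En n) 1) ∧ ∃ M, ∀ x ∈ ball (0 : En n) 1, |f x| ≤ M

/-- The space `𝒞_θ`. -/
def memCtheta (n : ℕ) (θ : ℝ) (u : En n → ℝ) : Prop :=
  LocallyIntegrable u volume ∧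
  ContinuousOn u (ball (0 : En n) 4) ∧
  (θ = 0 → ∃ M, ∀ x ∈ ball (0 : En n) 4, |u x| ≤ M) ∧
  (0 < θ → θ ≤ 1 → ∃ C : ℝ, ∀ x ∈ ball (0 : En n) 4, ∀ y ∈ ball (0 : En n) 4,
      |u x - u y| ≤ C * ‖x - y‖ ^ θ) ∧
  (1 < θ → (∀ x ∈ ball (0 : En n) 4, DifferentiableAt ℝ u x) ∧
      ∃ C : ℝ, ∀ x ∈ ball (0 : En n) 4, ∀ y ∈ ball (0 : En n) 4,
        ‖fderiv ℝ u x - fderiv ℝ u y‖ ≤ C * ‖x - y‖ ^ (θ - 1))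

/-- The kernel class `𝒦_{m,θ}`. -/
def memKclass (n m : ℕ) (θ : ℝ) (K : En n → En n → ℝ) : Prop :=
  (∀ y ∉ ball (0 : En n) 3, ContDiffOn ℝ m (fun x => K x y) (ball (0 : En n) 1)) ∧
  (∀ x ∈ ball (0 : En n) 1, Integrable (fun y => min (‖x - y‖ ^ θ) 1 * |K x y|) volume) ∧
  (1 < θ → ∀ x ∈ ball (0 : En n) 1, ∀ z ∈ ball (0 : En n) 1, K x (x + z) = K x (x - z))

/-- `sup_{|α| = m, x ∈ B₁} |∂^α_x K(x,y)|`, as an extended nonnegative real. -/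
noncomputable def supDeriv (n m : ℕ) (K : En n → En n → ℝ) (y : En n) : ℝ≥0∞ :=
  ⨆ α ∈ multiIdxEq n m, ⨆ x ∈ ball (0 : En n) 1,
    ENNReal.ofReal |mderiv α (fun z => K z y) x|

/-- The space `𝒞_{θ,K}`. -/
def memCthetaK (n m : ℕ) (θ : ℝ) (K : En n → En n → ℝ) (u : En n → ℝ) : Prop :=
  memCtheta n θ u ∧
  (∀ α : Fin n → ℕ, (∑ i, α i) < m → ∀ R > 3, ∀ x ∈ ball (0 : En n) 1,
      IntegrableOn (fun y => |u y| * |mderiv α (fun z => K z y) x|)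
        (ball (0 : En n) R \ ball (0 : En n) 3) volume) ∧
  (∫⁻ y in (ball (0 : En n) 3)ᶜ, ENNReal.ofReal |u y| * supDeriv n m K y) < ⊤

/-- `Au ≐_m f` in `B₁` (pointwise sense). -/
def AeqPoly (n m : ℕ) (K : En n → En n → ℝ) (u f : En n → ℝ) : Prop :=
  ∃ P fR : ℝ → En n → ℝ,
    (∀ R > 3, IsPolyDegLt n m (P R)) ∧
    (∀ R > 3, ∀ x ∈ ball (0 : En n) 1, opA K (chiCut R u) x = fR R x + P R x) ∧
    (∀ x ∈ ball (0 : En n) 1, Tendsto (fun R => fR R x) atTop (nhds (f x)))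

/-- The Taylor remainder kernel `ψ(x,y)`. -/
noncomputable def psiFun (n m : ℕ) (K : En n → En n → ℝ) (x y : En n) : ℝ :=
  -∑ α ∈ multiIdxEq n m,
      ((m : ℝ) * (∏ i, x i ^ α i) / ∏ i, ((α i).factorial : ℝ)) *
        ∫ t in (0 : ℝ)..1, (1 - t) ^ (m - 1) * mderiv α (fun z => K z y) (t • x)

/-- Convergence of `u_k` to `u` in the norm of the respective space `𝒞_θ(B₄)`. -/
def convCtheta (n : ℕ) (θ : ℝ) (uk : ℕ → En n → ℝ) (u : En n → ℝ) : Prop :=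
  (∀ ε > (0 : ℝ), ∃ N, ∀ k ≥ N, ∀ x ∈ ball (0 : En n) 4, |uk k x - u x| ≤ ε) ∧
  (0 < θ → θ ≤ 1 → ∀ ε > (0 : ℝ), ∃ N, ∀ k ≥ N,
      ∀ x ∈ ball (0 : En n) 4, ∀ y ∈ ball (0 : En n) 4,
        |(uk k x - u x) - (uk k y - u y)| ≤ ε * ‖x - y‖ ^ θ) ∧
  (1 < θ → ∀ ε > (0 : ℝ), ∃ N, ∀ k ≥ N,
      (∀ x ∈ ball (0 : En n) 4, ‖fderiv ℝ (uk k) x - fderiv ℝ u x‖ ≤ ε) ∧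
      ∀ x ∈ ball (0 : En n) 4, ∀ y ∈ ball (0 : En n) 4,
        ‖(fderiv ℝ (uk k) x - fderiv ℝ u x) - (fderiv ℝ (uk k) y - fderiv ℝ u y)‖
          ≤ ε * ‖x - y‖ ^ (θ - 1))

/-- The kernel class `𝒦⁺_{m,θ}` (nonnegative kernels). -/
def memKplus (n m : ℕ) (θ : ℝ) (K : En n → En n → ℝ) : Prop :=
  (∀ x ∈ ball (0 : En n) 1, ∀ y : En n, 0 ≤ K x y) ∧ memKclass n m θ K

/-- The space `𝒱_K` (for a kernel whose `x`-derivatives up to order `m` are used). -/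
def memV (n m : ℕ) (K : En n → En n → ℝ) (u : En n → ℝ) : Prop :=
  LocallyIntegrable u volume ∧ ContinuousOn u (ball (0 : En n) 4) ∧
  (∃ M, ∀ x ∈ ball (0 : En n) 4, |u x| ≤ M) ∧
  (∀ α : Fin n → ℕ, (∑ i, α i) < m → ∀ R > 3, ∀ x ∈ ball (0 : En n) 1,
      IntegrableOn (fun y => |u y| * |mderiv α (fun z => K z y) x|)
        (ball (0 : En n) R \ ball (0 : En n) 3) volume) ∧
  (∫⁻ y in (ball (0 : En n) 3)ᶜ, ENNReal.ofReal |u y| * supDeriv n m K y) < ⊤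

/-- `Av = g` in `B₁` in the viscosity sense (global smooth test functions). -/
def ViscSol (n : ℕ) (K : En n → En n → ℝ) (v g : En n → ℝ) : Prop :=
  ∀ x₀ ∈ ball (0 : En n) 1, ∀ φ : En n → ℝ, ContDiff ℝ (⊤ : ℕ∞) φ →
    ((∀ x, φ x ≤ v x) → φ x₀ = v x₀ → g x₀ ≤ opA K φ x₀) ∧
    ((∀ x, v x ≤ φ x) → φ x₀ = v x₀ → opA K φ x₀ ≤ g x₀)

/-- `Av = g` in `B₁` in the viscosity sense (test functions `C²` on a closed ball around the
touching point and equal to `v` outside of it). -/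
def ViscSolLoc (n : ℕ) (K : En n → En n → ℝ) (v g : En n → ℝ) : Prop :=
  ∀ x₀ ∈ ball (0 : En n) 1, ∀ ρ > (0 : ℝ), closure (ball x₀ ρ) ⊆ ball (0 : En n) 1 →
    ∀ φ : En n → ℝ, ContDiffOn ℝ 2 φ (closure (ball x₀ ρ)) →
      (∀ x ∉ ball x₀ ρ, φ x = v x) →
      ((∀ x, φ x ≤ v x) → φ x₀ = v x₀ → g x₀ ≤ opA K φ x₀) ∧
      ((∀ x, v x ≤ φ x) → φ x₀ = v x₀ → opA K φ x₀ ≤ g x₀)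

/-- `Av = g` in `B₁` in the viscosity sense (smooth test functions equal to `v` outside a
compact subset of `B₂`). -/
def ViscSolCpt (n : ℕ) (K : En n → En n → ℝ) (v g : En n → ℝ) : Prop :=
  ∀ x₀ ∈ ball (0 : En n) 1, ∀ φ : En n → ℝ, ContDiff ℝ (⊤ : ℕ∞) φ →
    (∃ s : Set (En n), IsCompact s ∧ s ⊆ ball (0 : En n) 2 ∧ ∀ x ∉ s, φ x = v x) →
    ((∀ x, φ x ≤ v x) → φ x₀ = v x₀ → g x₀ ≤ opA K φ x₀) ∧
    ((∀ x, v x ≤ φ x) → φ x₀ = v x₀ → opA K φ x₀ ≤ g x₀)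

/-- `Au ≐_m f` in `B₁` in the viscosity sense. -/
def AeqPolyVisc (n m : ℕ) (K : En n → En n → ℝ) (u f : En n → ℝ) : Prop :=
  ∃ P fR : ℝ → En n → ℝ,
    (∀ R > 3, IsPolyDegLt n m (P R)) ∧
    (∀ R > 3, BddContOn n (fR R)) ∧
    (∀ R > 3, ViscSol n K (chiCut R u) (fun x => fR R x + P R x)) ∧
    TendstoUniformlyOn (fun R x => fR R x) f atTop (ball (0 : En n) 1)

/-- Kernels comparable to that of the fractional Laplacian, symmetric and
translation invariant. -/
def FracKernel (n : ℕ) (s lam Lam : ℝ) (K : En n → En n → ℝ) : Prop :=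
  (∀ x y : En n, x ≠ y →
      lam * ‖x - y‖ ^ (-(n : ℝ) - 2 * s) ≤ K x y ∧
        K x y ≤ Lam * ‖x - y‖ ^ (-(n : ℝ) - 2 * s)) ∧
  (∀ x ∈ ball (0 : En n) 1, ∀ z ∈ ball (0 : En n) 1, K x (x + z) = K x (x - z)) ∧
  (∀ x y z : En n, K (x + z) (y + z) = K x y)

/-- The fractional Sobolev space `ℍ^s(B₁)` associated with the kernel `K`. -/
def memHs (n : ℕ) (K : En n → En n → ℝ) (g : En n → ℝ) : Prop :=
  MemLp g 2 (volume.restrict (ball (0 : En n) 1)) ∧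
  (∫⁻ p : En n × En n in {p | p.1 ∈ ball (0 : En n) 1 ∨ p.2 ∈ ball (0 : En n) 1},
      ENNReal.ofReal ((g p.1 - g p.2) ^ 2 * K p.1 p.2)) < ⊤

/-- The class `J_g(B₁)`. -/
def memJ (n : ℕ) (K : En n → En n → ℝ) (g u : En n → ℝ) : Prop :=
  memHs n K u ∧ ∀ x ∉ ball (0 : En n) 1, u x = g x

/-- The energy functional `E`. -/
noncomputable def energyE (n : ℕ) (K : En n → En n → ℝ) (f u : En n → ℝ) : ℝ :=
  (1 / 4) * (∫ p : En n × En n, (u p.1 - u p.2) ^ 2 * K p.1 p.2) -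
    ∫ x in ball (0 : En n) 1, f x * u x

/-- Weak solution of `Au = f` in `B₁`. -/
def WeakSol (n : ℕ) (K : En n → En n → ℝ) (u f : En n → ℝ) : Prop :=
  ∀ φ : En n → ℝ, ContDiff ℝ (⊤ : ℕ∞) φ → HasCompactSupport φ → tsupport φ ⊆ ball (0 : En n) 1 →
    (1 / 2) * (∫ p : En n × En n, (u p.1 - u p.2) * (φ p.1 - φ p.2) * K p.1 p.2)
      = ∫ x in ball (0 : En n) 1, f x * φ x

/-- Globally `α`-Hölder continuous function on `ℝⁿ`. -/
def HolderCont (n : ℕ) (a : ℝ) (g : En n → ℝ) : Prop :=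
  ∃ C : ℝ, 0 ≤ C ∧ ∀ x y : En n, |g x - g y| ≤ C * ‖x - y‖ ^ a

end


section Helpers

open MeasureTheory Metric Filter
open scoped ENNReal NNReal

theorem my_taylor_aux {E : Type*} [NormedAddCommGroup E] [NormedSpace ℝ E]
    {w : E → ℝ} {s : Set E} (hs : Convex ℝ s)
    (hdiff : ∀ z ∈ s, DifferentiableAt ℝ w z)
    {C θ' : ℝ} (hC : 0 ≤ C) (hθ' : 0 ≤ θ')
    (hHol : ∀ z ∈ s, ∀ z' ∈ s, ‖fderiv ℝ w z - fderiv ℝ w z'‖ ≤ C * ‖z - z'‖ ^ θ')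
    {x y : E} (hx : x ∈ s) (hy : y ∈ s) :
    |w y - w x - fderiv ℝ w x (y - x)| ≤ C * ‖y - x‖ ^ θ' * ‖y - x‖ := by
  set F : E → ℝ := fun z => w z - fderiv ℝ w x z with hF
  have hseg : segment ℝ x y ⊆ s := hs.segment_subset hx hy
  have hsegball : segment ℝ x y ⊆ closedBall x ‖y - x‖ := by
    apply (convex_closedBall x ‖y - x‖).segment_subset
    · simp
    · simp [mem_closedBall, dist_eq_norm]
  have key : ‖F y - F x‖ ≤ C * ‖y - x‖ ^ θ' * ‖y - x‖ := by
    apply Convex.norm_image_sub_le_of_norm_hasFDerivWithin_le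
      (f' := fun z => fderiv ℝ w z - fderiv ℝ w x)
      (fun z hz => (((hdiff z (hseg hz)).hasFDerivAt.sub
        ((fderiv ℝ w x).hasFDerivAt)).hasFDerivWithinAt))
      ?_ (convex_segment x y) (left_mem_segment ℝ x y) (right_mem_segment ℝ x y)
    intro z hz
    refine (hHol z (hseg hz) x hx).trans ?_
    have h1 : ‖z - x‖ ≤ ‖y - x‖ := by
      have := hsegball hz
      simpa [mem_closedBall, dist_eq_norm] using this
    exact mul_le_mul_of_nonneg_left
      (Real.rpow_le_rpow (norm_nonneg _) h1 hθ') hC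
  have heq2 : F y - F x = w y - w x - fderiv ℝ w x (y - x) := by
    simp [hF, map_sub]; ring
  rw [← heq2]
  simpa using key

theorem my_subseq_ae_tendsto {α : Type*} [MeasurableSpace α] {μ : Measure α}
    {F : ℕ → α → ℝ≥0∞} (hF : ∀ k, AEMeasurable (F k) μ)
    (h : Tendsto (fun k => ∫⁻ a, F k a ∂μ) atTop (nhds 0)) :
    ∃ φ : ℕ → ℕ, StrictMono φ ∧ ∀ᵐ a ∂μ, Tendsto (fun j => F (φ j) a) atTop (nhds 0) := by
  have hev : ∀ j : ℕ, ∀ᶠ k in atTop, ∫⁻ a, F k a ∂μ < 2⁻¹ ^ j := fun j =>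
    h.eventually_lt_const (ENNReal.pow_pos (by norm_num) j)
  obtain ⟨φ, hφ, hP⟩ := Filter.extraction_forall_of_eventually hev
  refine ⟨φ, hφ, ?_⟩
  have hsum : ∫⁻ a, ∑' j, F (φ j) a ∂μ ≠ ⊤ := by
    rw [lintegral_tsum (fun j => hF (φ j))]
    refine ne_top_of_le_ne_top ?_ (ENNReal.tsum_le_tsum (fun j => (hP j).le))
    simp [ENNReal.tsum_geometric]
  have hae : ∀ᵐ a ∂μ, ∑' j, F (φ j) a < ⊤ :=
    ae_lt_top' (AEMeasurable.ennreal_tsum (fun j => hF (φ j))) hsum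
  filter_upwards [hae] with a ha
  exact ENNReal.tendsto_atTop_zero_of_tsum_ne_top ha.ne

theorem my_rpow_mul_self {a θ : ℝ} (ha : 0 ≤ a) (hθ : 0 < θ) :
    a ^ (θ - 1) * a = a ^ θ := by
  rcases eq_or_lt_of_le ha with h | h
  · rw [← h, mul_zero, Real.zero_rpow (ne_of_gt hθ)]
  · rw [← Real.rpow_add_one (ne_of_gt h) (θ - 1)]
    ring_nf

theorem my_abs_sub (a b : ℝ) : |a - b| ≤ |a| + |b| := by
  rw [sub_eq_add_neg]
  exact (abs_add_le _ _).trans (by rw [abs_neg])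

theorem my_abs_aem {α : Type*} [MeasurableSpace α] {μ : MeasureTheory.Measure α}
    {f : α → ℝ} (h : AEMeasurable f μ) : AEMeasurable (fun y => |f y|) μ := by
  refine (h.max h.neg).congr (Filter.EventuallyEq.of_eq (funext fun y => ?_))
  exact (abs_eq_max_neg (a := f y)).symm

theorem my_abs_integral {α : Type*} [MeasurableSpace α] (μ : Measure α) (f : α → ℝ) :
    |∫ a, f a ∂μ| ≤ ∫ a, |f a| ∂μ := by
  have := norm_integral_le_integral_norm (μ := μ) f
  simpa [Real.norm_eq_abs] using this

end Helpers

set_option maxHeartbeats 1000000 in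
/-- Lemma `lemCS`: stability of the pointwise equation under convergence. -/
theorem statement_3 {n : ℕ} (hn : 1 ≤ n) (θ : ℝ) (hθ : θ ∈ Set.Icc (0 : ℝ) 2)
    (K : En n → En n → ℝ) (hK : memKclass n 0 θ K)
    (u : En n → ℝ) (uk : ℕ → En n → ℝ) (f : En n → ℝ) (fk : ℕ → En n → ℝ)
    (huk : ∀ k, memCthetaK n 0 θ K (uk k))
    (hfk : ∀ k, BddContOn n (fk k))
    (heq : ∀ k, ∀ x ∈ ball (0 : En n) 1,
        Integrable (fun y => (uk k x - uk k y) * K x y) volume ∧ opA K (uk k) x = fk k x)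
    (hfconv : TendstoUniformlyOn (fun k x => fk k x) f atTop (ball (0 : En n) 1))
    (hu : memCthetaK n 0 θ K u)
    (huconv : convCtheta n θ uk u)
    (htail : ∀ x ∈ ball (0 : En n) 1,
        Tendsto (fun k => ∫⁻ y in (ball (0 : En n) 3)ᶜ,
            ENNReal.ofReal (|u y - uk k y| * |K x y|)) atTop (nhds 0)) :
    ∀ x ∈ ball (0 : En n) 1,
      Integrable (fun y => (u x - u y) * K x y) volume ∧ opA K u x = f x := by
  intro x hx
  have hx1 : ‖x‖ < 1 := mem_ball_zero_iff.1 hx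
  have hθ0 : (0:ℝ) ≤ θ := hθ.1
  have hθ2 : θ ≤ 2 := hθ.2
  have hx4 : x ∈ ball (0 : En n) 4 := mem_ball_zero_iff.2 (by linarith)
  obtain ⟨hKreg, hKint', hKsym⟩ := hK
  have hKint : Integrable (fun y => min (‖x - y‖ ^ θ) 1 * |K x y|) volume := hKint' x hx
  have hminnn : ∀ y : En n, 0 ≤ min (‖x - y‖ ^ θ) 1 :=
    fun y => le_min (Real.rpow_nonneg (norm_nonneg _) θ) one_pos.le
  have hb34 : ball (0:En n) 3 ⊆ ball (0:En n) 4 := ball_subset_ball (by norm_num)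
  have hbx3 : ball x 1 ⊆ ball (0:En n) 3 := by
    intro y hy
    have h1 : ‖y - x‖ < 1 := mem_ball_iff_norm.1 hy
    have h2 : ‖y‖ ≤ ‖y - x‖ + ‖x‖ := by
      calc ‖y‖ = ‖y - x + x‖ := by rw [sub_add_cancel]
        _ ≤ ‖y - x‖ + ‖x‖ := norm_add_le _ _
    exact mem_ball_zero_iff.2 (by linarith)
  have hbx4 : ball x 1 ⊆ ball (0:En n) 4 := hbx3.trans hb34
  have hmin_far : ∀ y : En n, y ∉ ball x 1 → min (‖x - y‖ ^ θ) 1 = 1 := by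
    intro y hy
    rcases eq_or_lt_of_le hθ0 with h | h
    · rw [← h, Real.rpow_zero]; exact min_self 1
    · have h2 : ¬ dist y x < 1 := fun hc => hy (mem_ball.2 hc)
      rw [dist_eq_norm] at h2
      have h1 : (1:ℝ) ≤ ‖x - y‖ := by
        rw [norm_sub_rev]; linarith [not_lt.1 h2]
      exact min_eq_right (Real.one_le_rpow h1 (le_of_lt h))
  have hmin_near : ∀ y : En n, y ∈ ball x 1 → min (‖x - y‖ ^ θ) 1 = ‖x - y‖ ^ θ := by
    intro y hy
    apply min_eq_left
    apply Real.rpow_le_one (norm_nonneg _) ?_ hθ0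
    have h2 : dist y x < 1 := mem_ball.1 hy
    rw [dist_eq_norm] at h2
    rw [norm_sub_rev]
    linarith
  -- measurability of |K x ·|
  have hsing : volume ({x} : Set (En n)) = 0 := by
    haveI : Nonempty (Fin n) := ⟨⟨0, hn⟩⟩
    exact measure_singleton x
  have hMcont : Continuous fun y : En n => min (‖x - y‖ ^ θ) 1 := by
    refine Continuous.min ?_ continuous_const
    refine continuous_iff_continuousAt.2 (fun y => ?_)
    exact (Real.continuousAt_rpow_const _ _ (Or.inr hθ0)).comp
      ((continuous_const.sub continuous_id).norm.continuousAt)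
  have hKabs : AEMeasurable (fun y => |K x y|) volume := by
    have h1 : AEMeasurable (fun y => min (‖x - y‖ ^ θ) 1 * |K x y|) volume :=
      hKint.aestronglyMeasurable.aemeasurable
    have h3 : AEMeasurable
        (fun y => (min (‖x - y‖ ^ θ) 1 * |K x y|) / min (‖x - y‖ ^ θ) 1) volume :=
      h1.div hMcont.aemeasurable
    refine h3.congr (ae_iff.2 (measure_mono_null ?_ hsing))
    intro y hy
    simp only [Set.mem_setOf_eq] at hy
    by_contra hyx
    apply hy
    have hyx' : y ≠ x := fun hc => hyx (by simp [hc])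
    have hpos : 0 < min (‖x - y‖ ^ θ) 1 := by
      rcases eq_or_lt_of_le hθ0 with h | h
      · rw [← h, Real.rpow_zero]; norm_num
      · refine lt_min ?_ one_pos
        apply Real.rpow_pos_of_pos
        rw [norm_pos_iff]
        exact sub_ne_zero.2 (Ne.symm hyx')
    exact mul_div_cancel_left₀ _ (ne_of_gt hpos)
  have hKout : IntegrableOn (fun y => |K x y|) (ball x 1)ᶜ volume := by
    refine hKint.integrableOn.congr_fun (fun y hy => ?_) measurableSet_ball.compl
    beta_reduce
    rw [hmin_far y hy, one_mul]
  have hKA3 : IntegrableOn (fun y => |K x y|) (ball (0:En n) 3)ᶜ volume :=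
    hKout.mono_set (Set.compl_subset_compl.2 hbx3)
  have hKA2 : IntegrableOn (fun y => |K x y|) (ball (0:En n) 3 \ ball x 1) volume :=
    hKout.mono_set (fun y hy => hy.2)
  -- measurability of the limit function
  have hum : AEStronglyMeasurable u volume := hu.1.1.aestronglyMeasurable
  have hukm : ∀ k, AEStronglyMeasurable (uk k) volume := fun k =>
    (huk k).1.1.aestronglyMeasurable
  obtain ⟨hconv0, hconvH, hconvD⟩ := huconv
  have hptB4 : ∀ y ∈ ball (0:En n) 4, Tendsto (fun k => uk k y) atTop (nhds (u y)) := by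
    intro y hy
    rw [Metric.tendsto_atTop]
    intro ε hε
    obtain ⟨N, hN⟩ := hconv0 (ε/2) (by positivity)
    refine ⟨N, fun k hk => ?_⟩
    have := hN k hk y hy
    rw [Real.dist_eq]
    linarith
  have hFm : ∀ k, AEMeasurable (fun y => ENNReal.ofReal (|u y - uk k y| * |K x y|))
      (volume.restrict (ball (0:En n) 3)ᶜ) := fun k =>
    (((my_abs_aem (hum.sub (hukm k)).aemeasurable).mul hKabs).ennreal_ofReal).restrict
  obtain ⟨φ, hφmono, hφae⟩ := my_subseq_ae_tendsto hFm (htail x hx)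
  have hφten : Tendsto φ atTop atTop := hφmono.tendsto_atTop
  have hB3ae : ∀ᵐ y ∂(volume : Measure (En n)), y ∈ (ball (0:En n) 3)ᶜ →
      Tendsto (fun j => ENNReal.ofReal (|u y - uk (φ j) y| * |K x y|)) atTop (nhds 0) :=
    ae_imp_of_ae_restrict hφae
  have hgconv : ∀ᵐ y ∂(volume : Measure (En n)),
      Tendsto (fun j => (uk (φ j) x - uk (φ j) y) * K x y) atTop
        (nhds ((u x - u y) * K x y)) := by
    filter_upwards [hB3ae] with y hy
    by_cases hyB : y ∈ ball (0:En n) 4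
    · exact (((hptB4 x hx4).comp hφten).sub ((hptB4 y hyB).comp hφten)).mul_const _
    · have hy3 : y ∈ (ball (0:En n) 3)ᶜ := fun hc => hyB (hb34 hc)
      have h0 := hy hy3
      have h0' : Tendsto (fun j => |u y - uk (φ j) y| * |K x y|) atTop (nhds 0) := by
        have hcont : Tendsto ENNReal.toReal (nhds (0:ENNReal)) (nhds 0) := by
          simpa using ENNReal.tendsto_toReal (a := 0) (by simp)
        have h5 := hcont.comp h0
        have heqf : (fun j => (ENNReal.ofReal (|u y - uk (φ j) y| * |K x y|)).toReal)
            = fun j => |u y - uk (φ j) y| * |K x y| := by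
          funext j
          exact ENNReal.toReal_ofReal (by positivity)
        rw [← heqf]
        exact h5
      have hdiff : Tendsto (fun j => (uk (φ j) x - uk (φ j) y) * K x y
          - (u x - u y) * K x y) atTop (nhds 0) := by
        apply squeeze_zero_norm (a := fun j => |uk (φ j) x - u x| * |K x y|
          + |u y - uk (φ j) y| * |K x y|)
        · intro j
          have he : (uk (φ j) x - uk (φ j) y) * K x y - (u x - u y) * K x y
              = ((uk (φ j) x - u x) + (u y - uk (φ j) y)) * K x y := by ring
          rw [he, Real.norm_eq_abs, abs_mul]
          calc |(uk (φ j) x - u x) + (u y - uk (φ j) y)| * |K x y|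
              ≤ (|uk (φ j) x - u x| + |u y - uk (φ j) y|) * |K x y| :=
                mul_le_mul_of_nonneg_right (abs_add_le _ _) (abs_nonneg _)
            _ = _ := by ring
        · have h1 : Tendsto (fun j => |uk (φ j) x - u x| * |K x y|) atTop (nhds 0) := by
            have h2 := (((hptB4 x hx4).comp hφten).sub_const (u x)).abs
            have h3 := h2.mul_const |K x y|
            simpa using h3
          simpa using h1.add h0'
      have h6 := hdiff.add_const ((u x - u y) * K x y)
      simpa using h6
  have hgmeas : AEStronglyMeasurable (fun y => (u x - u y) * K x y) volume :=
    aestronglyMeasurable_of_tendsto_ae atTop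
      (fun j => (heq (φ j) x hx).1.aestronglyMeasurable) hgconv
  -- bound of u on closed ball 3
  have hcb34 : closedBall (0:En n) 3 ⊆ ball (0:En n) 4 := fun y hy =>
    mem_ball_zero_iff.2 (lt_of_le_of_lt (mem_closedBall_zero_iff.1 hy) (by norm_num))
  obtain ⟨M3, hM3⟩ := (isCompact_closedBall (0:En n) 3).exists_bound_of_continuousOn
      (hu.1.2.1.mono hcb34)
  have hM3' : ∀ y ∈ closedBall (0:En n) 3, |u y| ≤ |M3| := fun y hy => by
    have h := hM3 y hy
    rw [Real.norm_eq_abs] at h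
    exact h.trans (le_abs_self M3)
  have hxcb : x ∈ closedBall (0:En n) 3 := mem_closedBall_zero_iff.2 (by linarith)
  -- the quantity Imin
  set Imin : ℝ := ∫ y, min (‖x - y‖ ^ θ) 1 * |K x y| with hImindef
  have hImin0 : 0 ≤ Imin :=
    integral_nonneg (fun y => mul_nonneg (hminnn y) (abs_nonneg _))
  have hminlint : ∫⁻ y, ENNReal.ofReal (min (‖x - y‖ ^ θ) 1 * |K x y|) < ⊤ := by
    have h2 := hKint.2
    rw [hasFiniteIntegral_iff_norm] at h2
    refine lt_of_eq_of_lt (lintegral_congr (fun y => ?_)) h2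
    rw [Real.norm_eq_abs, abs_of_nonneg (mul_nonneg (hminnn y) (abs_nonneg _))]
  have hgklint : ∀ k, ∫⁻ y, ENNReal.ofReal |(uk k x - uk k y) * K x y| < ⊤ := by
    intro k
    have h2 := (heq k x hx).1.2
    rw [hasFiniteIntegral_iff_norm] at h2
    refine lt_of_eq_of_lt (lintegral_congr (fun y => ?_)) h2
    rw [Real.norm_eq_abs]
  -- MAIN ball-x-1 estimates (θ case analysis)
  have hmain1 : IntegrableOn (fun y => (u x - u y) * K x y) (ball x 1) volume ∧
      ∀ ε : ℝ, 0 < ε → ∀ᶠ k in atTop,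
        |∫ y in ball x 1, ((u x - u y) * K x y - (uk k x - uk k y) * K x y)| ≤ ε := by
    rcases le_or_gt θ 1 with hθle | hθ1
    · -- case θ ≤ 1
      have hsmall : ∀ ε : ℝ, 0 < ε → ∀ᶠ k in atTop, ∀ y ∈ ball x 1,
          |(u x - u y) - (uk k x - uk k y)| ≤ ε * min (‖x - y‖ ^ θ) 1 := by
        intro ε hε
        rcases eq_or_lt_of_le hθ0 with hth | hth
        · obtain ⟨N, hN⟩ := hconv0 (ε/2) (by positivity)
          refine eventually_atTop.2 ⟨N, fun k hk y hy => ?_⟩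
          have h1 := hN k hk x hx4
          have h2 := hN k hk y (hbx4 hy)
          have hm : min (‖x - y‖ ^ θ) 1 = 1 := by
            rw [← hth, Real.rpow_zero]; exact min_self 1
          rw [hm, mul_one]
          have he : (u x - u y) - (uk k x - uk k y)
              = -((uk k x - u x) - (uk k y - u y)) := by ring
          rw [he, abs_neg]
          calc |(uk k x - u x) - (uk k y - u y)|
              ≤ |uk k x - u x| + |uk k y - u y| := my_abs_sub _ _
            _ ≤ ε := by linarith
        · obtain ⟨N, hN⟩ := hconvH hth hθle ε hε
          refine eventually_atTop.2 ⟨N, fun k hk y hy => ?_⟩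
          have h1 := hN k hk x hx4 y (hbx4 hy)
          rw [hmin_near y hy]
          have he : (u x - u y) - (uk k x - uk k y)
              = -(uk k x - u x - (uk k y - u y)) := by ring
          rw [he, abs_neg]
          exact h1
      have hgbd : ∃ C : ℝ, 0 ≤ C ∧ ∀ y ∈ ball x 1,
          |u x - u y| ≤ C * min (‖x - y‖ ^ θ) 1 := by
        rcases eq_or_lt_of_le hθ0 with hth | hth
        · obtain ⟨M, hM⟩ := hu.1.2.2.1 hth.symm
          refine ⟨2 * |M|, by positivity, fun y hy => ?_⟩
          have hm : min (‖x - y‖ ^ θ) 1 = 1 := by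
            rw [← hth, Real.rpow_zero]; exact min_self 1
          rw [hm, mul_one]
          have h1 := hM x hx4
          have h2 := hM y (hbx4 hy)
          have h3 := le_abs_self M
          calc |u x - u y| ≤ |u x| + |u y| := my_abs_sub _ _
            _ ≤ 2 * |M| := by linarith
        · obtain ⟨C, hC⟩ := hu.1.2.2.2.1 hth hθle
          refine ⟨|C|, abs_nonneg C, fun y hy => ?_⟩
          rw [hmin_near y hy]
          exact (hC x hx4 y (hbx4 hy)).trans
            (mul_le_mul_of_nonneg_right (le_abs_self C)
              (Real.rpow_nonneg (norm_nonneg _) θ))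
      obtain ⟨C, hC0, hCb⟩ := hgbd
      have hint1 : IntegrableOn (fun y => (u x - u y) * K x y) (ball x 1) volume := by
        refine Integrable.mono' ((hKint.const_mul C).integrableOn) hgmeas.restrict ?_
        rw [ae_restrict_iff' measurableSet_ball]
        refine ae_of_all _ (fun y hy => ?_)
        rw [Real.norm_eq_abs, abs_mul]
        calc |u x - u y| * |K x y| ≤ (C * min (‖x - y‖ ^ θ) 1) * |K x y| :=
            mul_le_mul_of_nonneg_right (hCb y hy) (abs_nonneg _)
          _ = C * (min (‖x - y‖ ^ θ) 1 * |K x y|) := by ring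
      refine ⟨hint1, fun ε hε => ?_⟩
      have hεI : 0 < ε / (Imin + 1) := by positivity
      filter_upwards [hsmall _ hεI] with k hks
      have hint2 : IntegrableOn (fun y => (uk k x - uk k y) * K x y) (ball x 1) volume :=
        (heq k x hx).1.integrableOn
      have hintd : IntegrableOn
          (fun y => (u x - u y) * K x y - (uk k x - uk k y) * K x y) (ball x 1) volume := by
        have h12 := hint1.sub hint2
        exact h12
      calc |∫ y in ball x 1, ((u x - u y) * K x y - (uk k x - uk k y) * K x y)|
          ≤ ∫ y in ball x 1, |(u x - u y) * K x y - (uk k x - uk k y) * K x y| :=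
            my_abs_integral _ _
        _ ≤ ∫ y in ball x 1, (ε / (Imin + 1)) * (min (‖x - y‖ ^ θ) 1 * |K x y|) := by
            refine setIntegral_mono_on hintd.abs
              ((hKint.const_mul _).integrableOn) measurableSet_ball (fun y hy => ?_)
            have hd : (u x - u y) * K x y - (uk k x - uk k y) * K x y
                = ((u x - u y) - (uk k x - uk k y)) * K x y := by ring
            rw [hd, abs_mul]
            calc |(u x - u y) - (uk k x - uk k y)| * |K x y|
                ≤ ((ε / (Imin + 1)) * min (‖x - y‖ ^ θ) 1) * |K x y| :=
                  mul_le_mul_of_nonneg_right (hks y hy) (abs_nonneg _)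
              _ = (ε / (Imin + 1)) * (min (‖x - y‖ ^ θ) 1 * |K x y|) := by ring
        _ = (ε / (Imin + 1)) * ∫ y in ball x 1, min (‖x - y‖ ^ θ) 1 * |K x y| :=
            integral_const_mul _ _
        _ ≤ (ε / (Imin + 1)) * Imin := by
            refine mul_le_mul_of_nonneg_left ?_ hεI.le
            rw [hImindef]
            exact setIntegral_le_integral hKint
              (ae_of_all _ (fun y => mul_nonneg (hminnn y) (abs_nonneg _)))
        _ ≤ ε := by
            rw [div_mul_eq_mul_div, div_le_iff₀ (by positivity)]
            nlinarith
    · -- case θ > 1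
      obtain ⟨hudiff, Cu, hCu⟩ := hu.1.2.2.2.2 hθ1
      have htayu : ∀ y ∈ ball (0:En n) 4,
          |u y - u x - fderiv ℝ u x (y - x)| ≤ |Cu| * ‖y - x‖ ^ (θ-1) * ‖y - x‖ := by
        intro y hy
        refine my_taylor_aux (convex_ball _ _) hudiff (abs_nonneg Cu) (by linarith) ?_ hx4 hy
        intro z hz z' hz'
        exact (hCu z hz z' hz').trans (mul_le_mul_of_nonneg_right (le_abs_self Cu)
          (Real.rpow_nonneg (norm_nonneg _) _))
      set Wc : Set (En n →L[ℝ] ℝ) :=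
        {l | ∫⁻ y in ball x 1, ENNReal.ofReal (‖l (y - x)‖ * |K x y|) < ⊤} with hWcdef
      have hWmeasur : ∀ l : En n →L[ℝ] ℝ, AEMeasurable
          (fun y => ENNReal.ofReal (‖l (y - x)‖ * |K x y|)) (volume.restrict (ball x 1)) :=
        fun l => ((((l.continuous.comp
          (continuous_id.sub continuous_const)).norm.aemeasurable).mul
            hKabs).ennreal_ofReal).restrict
      let W : Submodule ℝ (En n →L[ℝ] ℝ) :=
        { carrier := Wc
          add_mem' := by
            intro a b ha hb
            simp only [hWcdef, Set.mem_setOf_eq] at ha hb ⊢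
            have hle : ∀ y : En n, ENNReal.ofReal (‖(a + b) (y - x)‖ * |K x y|)
                ≤ ENNReal.ofReal (‖a (y - x)‖ * |K x y|)
                  + ENNReal.ofReal (‖b (y - x)‖ * |K x y|) := by
              intro y
              rw [← ENNReal.ofReal_add (by positivity) (by positivity)]
              apply ENNReal.ofReal_le_ofReal
              rw [← add_mul]
              refine mul_le_mul_of_nonneg_right ?_ (abs_nonneg _)
              calc ‖(a + b) (y - x)‖ = ‖a (y - x) + b (y - x)‖ := by
                    rw [ContinuousLinearMap.add_apply]
                _ ≤ ‖a (y - x)‖ + ‖b (y - x)‖ := norm_add_le _ _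
            calc ∫⁻ y in ball x 1, ENNReal.ofReal (‖(a + b) (y - x)‖ * |K x y|)
                ≤ ∫⁻ y in ball x 1, (ENNReal.ofReal (‖a (y - x)‖ * |K x y|)
                  + ENNReal.ofReal (‖b (y - x)‖ * |K x y|)) := lintegral_mono hle
              _ = (∫⁻ y in ball x 1, ENNReal.ofReal (‖a (y - x)‖ * |K x y|))
                  + ∫⁻ y in ball x 1, ENNReal.ofReal (‖b (y - x)‖ * |K x y|) :=
                lintegral_add_left' (hWmeasur a) _
              _ < ⊤ := ENNReal.add_lt_top.2 ⟨ha, hb⟩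
          zero_mem' := by
            simp only [hWcdef, Set.mem_setOf_eq]
            have hz : ∀ y : En n,
                ENNReal.ofReal (‖(0 : En n →L[ℝ] ℝ) (y - x)‖ * |K x y|) = 0 := by
              intro y; simp
            rw [lintegral_congr hz, lintegral_zero]
            exact ENNReal.zero_lt_top
          smul_mem' := by
            intro c l hl
            simp only [hWcdef, Set.mem_setOf_eq] at hl ⊢
            have heq2 : ∀ y : En n, ENNReal.ofReal (‖(c • l) (y - x)‖ * |K x y|)
                = ENNReal.ofReal ‖c‖ * ENNReal.ofReal (‖l (y - x)‖ * |K x y|) := by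
              intro y
              rw [← ENNReal.ofReal_mul (norm_nonneg c)]
              congr 1
              rw [ContinuousLinearMap.smul_apply, norm_smul]
              ring
            rw [lintegral_congr heq2, lintegral_const_mul' _ _ ENNReal.ofReal_ne_top]
            exact ENNReal.mul_lt_top ENNReal.ofReal_lt_top hl }
      have hWmem : ∀ k, fderiv ℝ (uk k) x ∈ Wc := by
        intro k
        obtain ⟨hkd, Ck, hCk⟩ := (huk k).1.2.2.2.2 hθ1
        have htayk : ∀ y ∈ ball (0:En n) 4,
            |uk k y - uk k x - fderiv ℝ (uk k) x (y - x)|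
              ≤ |Ck| * ‖y - x‖ ^ (θ-1) * ‖y - x‖ := by
          intro y hy
          refine my_taylor_aux (convex_ball _ _) hkd (abs_nonneg Ck) (by linarith) ?_ hx4 hy
          intro z hz z' hz'
          exact (hCk z hz z' hz').trans (mul_le_mul_of_nonneg_right (le_abs_self Ck)
            (Real.rpow_nonneg (norm_nonneg _) _))
        simp only [hWcdef, Set.mem_setOf_eq]
        have hpt : ∀ y ∈ ball x 1, ENNReal.ofReal (‖fderiv ℝ (uk k) x (y - x)‖ * |K x y|)
            ≤ ENNReal.ofReal (|Ck| * (min (‖x - y‖ ^ θ) 1 * |K x y|))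
              + ENNReal.ofReal |(uk k x - uk k y) * K x y| := by
          intro y hy
          rw [← ENNReal.ofReal_add (by positivity) (abs_nonneg _)]
          apply ENNReal.ofReal_le_ofReal
          have hyB4 := hbx4 hy
          have h6 : ‖y - x‖ ^ (θ-1) * ‖y - x‖ = min (‖x - y‖ ^ θ) 1 := by
            rw [my_rpow_mul_self (norm_nonneg _) (by linarith : (0:ℝ) < θ),
              norm_sub_rev y x, hmin_near y hy]
          have h4 : ‖fderiv ℝ (uk k) x (y - x)‖
              ≤ |Ck| * (‖y - x‖ ^ (θ-1) * ‖y - x‖) + |uk k x - uk k y| := by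
            have h5 : fderiv ℝ (uk k) x (y - x)
                = (uk k y - uk k x) - (uk k y - uk k x - fderiv ℝ (uk k) x (y - x)) := by
              ring
            rw [Real.norm_eq_abs, h5]
            refine (my_abs_sub _ _).trans ?_
            rw [abs_sub_comm (uk k y) (uk k x)]
            have h7 := htayk y hyB4
            rw [mul_assoc] at h7
            linarith
          calc ‖fderiv ℝ (uk k) x (y - x)‖ * |K x y|
              ≤ (|Ck| * (‖y - x‖ ^ (θ-1) * ‖y - x‖) + |uk k x - uk k y|) * |K x y| :=
                mul_le_mul_of_nonneg_right h4 (abs_nonneg _)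
            _ = |Ck| * (min (‖x - y‖ ^ θ) 1 * |K x y|) + |(uk k x - uk k y) * K x y| := by
                rw [h6, abs_mul]; ring
        calc ∫⁻ y in ball x 1, ENNReal.ofReal (‖fderiv ℝ (uk k) x (y - x)‖ * |K x y|)
            ≤ ∫⁻ y in ball x 1, (ENNReal.ofReal (|Ck| * (min (‖x - y‖ ^ θ) 1 * |K x y|))
              + ENNReal.ofReal |(uk k x - uk k y) * K x y|) :=
              lintegral_mono_ae ((ae_restrict_iff' measurableSet_ball).2
                (ae_of_all _ hpt))
          _ = (∫⁻ y in ball x 1, ENNReal.ofReal (|Ck| * (min (‖x - y‖ ^ θ) 1 * |K x y|)))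
              + ∫⁻ y in ball x 1, ENNReal.ofReal |(uk k x - uk k y) * K x y| :=
            lintegral_add_left'
              ((((hMcont.aemeasurable.mul hKabs).const_mul |Ck|).ennreal_ofReal).restrict) _
          _ < ⊤ := by
              refine ENNReal.add_lt_top.2 ⟨?_, ?_⟩
              · calc ∫⁻ y in ball x 1, ENNReal.ofReal (|Ck| * (min (‖x - y‖ ^ θ) 1 * |K x y|))
                    = ∫⁻ y in ball x 1, ENNReal.ofReal |Ck|
                        * ENNReal.ofReal (min (‖x - y‖ ^ θ) 1 * |K x y|) :=
                      lintegral_congr (fun y => ENNReal.ofReal_mul (abs_nonneg _))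
                  _ = ENNReal.ofReal |Ck|
                      * ∫⁻ y in ball x 1, ENNReal.ofReal (min (‖x - y‖ ^ θ) 1 * |K x y|) :=
                    lintegral_const_mul' _ _ ENNReal.ofReal_ne_top
                  _ < ⊤ := ENNReal.mul_lt_top ENNReal.ofReal_lt_top
                      (lt_of_le_of_lt (setLIntegral_le_lintegral _ _) hminlint)
              · exact lt_of_le_of_lt (setLIntegral_le_lintegral _ _) (hgklint k)
      have hDten : Tendsto (fun k => fderiv ℝ (uk k) x) atTop (nhds (fderiv ℝ u x)) := by
        rw [Metric.tendsto_atTop]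
        intro ε hε
        obtain ⟨N, hN⟩ := hconvD hθ1 (ε/2) (by positivity)
        refine ⟨N, fun k hk => ?_⟩
        have h1 := (hN k hk).1 x hx4
        rw [dist_eq_norm]
        linarith
      have hWu : fderiv ℝ u x ∈ Wc := by
        have hWclosed : IsClosed (W : Set (En n →L[ℝ] ℝ)) := W.closed_of_finiteDimensional
        exact hWclosed.mem_of_tendsto hDten (Filter.Eventually.of_forall hWmem)
      have hWufin : ∫⁻ y in ball x 1,
          ENNReal.ofReal (‖fderiv ℝ u x (y - x)‖ * |K x y|) < ⊤ := hWu
      have hint1 : IntegrableOn (fun y => (u x - u y) * K x y) (ball x 1) volume := by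
        refine ⟨hgmeas.restrict, ?_⟩
        rw [hasFiniteIntegral_iff_norm]
        have hpt : ∀ y ∈ ball x 1, ENNReal.ofReal ‖(u x - u y) * K x y‖
            ≤ ENNReal.ofReal (|Cu| * (min (‖x - y‖ ^ θ) 1 * |K x y|))
              + ENNReal.ofReal (‖fderiv ℝ u x (y - x)‖ * |K x y|) := by
          intro y hy
          rw [← ENNReal.ofReal_add (by positivity) (by positivity)]
          apply ENNReal.ofReal_le_ofReal
          rw [Real.norm_eq_abs, abs_mul]
          have h6 : ‖y - x‖ ^ (θ-1) * ‖y - x‖ = min (‖x - y‖ ^ θ) 1 := by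
            rw [my_rpow_mul_self (norm_nonneg _) (by linarith : (0:ℝ) < θ),
              norm_sub_rev y x, hmin_near y hy]
          have h4 : |u x - u y|
              ≤ |Cu| * (‖y - x‖ ^ (θ-1) * ‖y - x‖) + ‖fderiv ℝ u x (y - x)‖ := by
            have h5 : u x - u y
                = (-(u y - u x - fderiv ℝ u x (y - x))) - fderiv ℝ u x (y - x) := by ring
            rw [h5]
            refine (my_abs_sub _ _).trans ?_
            rw [abs_neg]
            have h7 := htayu y (hbx4 hy)
            rw [mul_assoc] at h7
            rw [Real.norm_eq_abs]
            linarith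
          calc |u x - u y| * |K x y|
              ≤ (|Cu| * (‖y - x‖ ^ (θ-1) * ‖y - x‖) + ‖fderiv ℝ u x (y - x)‖) * |K x y| :=
                mul_le_mul_of_nonneg_right h4 (abs_nonneg _)
            _ = |Cu| * (min (‖x - y‖ ^ θ) 1 * |K x y|)
                + ‖fderiv ℝ u x (y - x)‖ * |K x y| := by rw [h6]; ring
        calc ∫⁻ y in ball x 1, ENNReal.ofReal ‖(u x - u y) * K x y‖
            ≤ ∫⁻ y in ball x 1, (ENNReal.ofReal (|Cu| * (min (‖x - y‖ ^ θ) 1 * |K x y|))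
              + ENNReal.ofReal (‖fderiv ℝ u x (y - x)‖ * |K x y|)) :=
              lintegral_mono_ae ((ae_restrict_iff' measurableSet_ball).2
                (ae_of_all _ hpt))
          _ = (∫⁻ y in ball x 1, ENNReal.ofReal (|Cu| * (min (‖x - y‖ ^ θ) 1 * |K x y|)))
              + ∫⁻ y in ball x 1, ENNReal.ofReal (‖fderiv ℝ u x (y - x)‖ * |K x y|) :=
            lintegral_add_left'
              ((((hMcont.aemeasurable.mul hKabs).const_mul |Cu|).ennreal_ofReal).restrict) _
          _ < ⊤ := by
              refine ENNReal.add_lt_top.2 ⟨?_, hWufin⟩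
              calc ∫⁻ y in ball x 1, ENNReal.ofReal (|Cu| * (min (‖x - y‖ ^ θ) 1 * |K x y|))
                  = ∫⁻ y in ball x 1, ENNReal.ofReal |Cu|
                      * ENNReal.ofReal (min (‖x - y‖ ^ θ) 1 * |K x y|) :=
                    lintegral_congr (fun y => ENNReal.ofReal_mul (abs_nonneg _))
                _ = ENNReal.ofReal |Cu|
                    * ∫⁻ y in ball x 1, ENNReal.ofReal (min (‖x - y‖ ^ θ) 1 * |K x y|) :=
                  lintegral_const_mul' _ _ ENNReal.ofReal_ne_top
                _ < ⊤ := ENNReal.mul_lt_top ENNReal.ofReal_lt_top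
                    (lt_of_le_of_lt (setLIntegral_le_lintegral _ _) hminlint)
      refine ⟨hint1, fun ε hε => ?_⟩
      have hεI : 0 < ε / (2 * (Imin + 1)) := by positivity
      obtain ⟨N, hN⟩ := hconvD hθ1 (ε / (2 * (Imin + 1))) hεI
      refine eventually_atTop.2 ⟨N, fun k hk => ?_⟩
      obtain ⟨hbd, hhol⟩ := hN k hk
      have hukdk := ((huk k).1.2.2.2.2 hθ1).1
      have hwd : ∀ z ∈ ball (0:En n) 4, DifferentiableAt ℝ (fun t => uk k t - u t) z :=
        fun z hz => (hukdk z hz).sub (hudiff z hz)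
      have hwfd : ∀ z ∈ ball (0:En n) 4, fderiv ℝ (fun t => uk k t - u t) z
          = fderiv ℝ (uk k) z - fderiv ℝ u z :=
        fun z hz => fderiv_sub (hukdk z hz) (hudiff z hz)
      have htayw : ∀ y ∈ ball (0:En n) 4,
          |(uk k y - u y) - (uk k x - u x) - (fderiv ℝ (uk k) x - fderiv ℝ u x) (y - x)|
            ≤ (ε / (2 * (Imin + 1))) * ‖y - x‖ ^ (θ-1) * ‖y - x‖ := by
        intro y hy
        have h7 := my_taylor_aux (convex_ball (0:En n) 4) hwd hεI.le
          (by linarith : (0:ℝ) ≤ θ - 1) ?_ hx4 hy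
        · rw [hwfd x hx4] at h7
          exact h7
        · intro z hz z' hz'
          rw [hwfd z hz, hwfd z' hz']
          exact hhol z hz z' hz'
      set F : En n → ℝ := fun y => (u x - u y) * K x y - (uk k x - uk k y) * K x y
        with hFdef
      have hσmp : MeasurePreserving (fun y : En n => (x + x) - y) volume volume :=
        Measure.measurePreserving_sub_left volume (x + x)
      have hσemb : MeasurableEmbedding (fun y : En n => (x + x) - y) :=
        (MeasurableEquiv.subLeft (x + x)).measurableEmbedding
      have hσpre : (fun y : En n => (x + x) - y) ⁻¹' (ball x 1) = ball x 1 := by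
        ext y
        simp only [Set.mem_preimage, mem_ball, dist_eq_norm]
        rw [show x + x - y - x = x - y by abel, norm_sub_rev x y]
      have hint2k : IntegrableOn F (ball x 1) volume := by
        have h12 := hint1.sub ((heq k x hx).1.integrableOn (s := ball x 1))
        exact h12
      have hre : MeasurePreserving (fun y : En n => (x + x) - y)
          (volume.restrict (ball x 1)) (volume.restrict (ball x 1)) := by
        have h8 := hσmp.restrict_preimage (measurableSet_ball (x := x) (ε := 1))
        rwa [hσpre] at h8
      have hσint : IntegrableOn (fun y => F ((x + x) - y)) (ball x 1) volume := by
        have h9 := (hre.integrable_comp_emb hσemb).2 hint2k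
        exact h9
      have hrefl : ∫ y in ball x 1, F ((x + x) - y) = ∫ y in ball x 1, F y := by
        have h9 := hσmp.setIntegral_preimage_emb hσemb F (ball x 1)
        rwa [hσpre] at h9
      have hsum : ∀ y ∈ ball x 1, |F y + F ((x + x) - y)|
          ≤ 2 * (ε / (2 * (Imin + 1))) * (min (‖x - y‖ ^ θ) 1 * |K x y|) := by
        intro y hy
        have hyB4 := hbx4 hy
        have hσy1 : (x + x) - y ∈ ball x 1 := by
          have h10 : y ∈ (fun y : En n => (x + x) - y) ⁻¹' (ball x 1) := by
            rw [hσpre]; exact hy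
          exact h10
        have hσyB4 := hbx4 hσy1
        have hzball : y - x ∈ ball (0:En n) 1 :=
          mem_ball_zero_iff.2 (mem_ball_iff_norm.1 hy)
        have hKs : K x ((x + x) - y) = K x y := by
          have h11 := hKsym hθ1 x hx (y - x) hzball
          rw [show x + (y - x) = y by abel, show x - (y - x) = (x + x) - y by abel] at h11
          exact h11.symm
        have hFy : F y = ((uk k y - u y) - (uk k x - u x)) * K x y := by
          rw [hFdef]; ring
        have hFσ : F ((x + x) - y) = ((uk k ((x + x) - y) - u ((x + x) - y))
            - (uk k x - u x)) * K x y := by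
          simp only [hFdef]
          rw [hKs]; ring
        have hcancel : (fderiv ℝ (uk k) x - fderiv ℝ u x) (y - x)
            + (fderiv ℝ (uk k) x - fderiv ℝ u x) (((x + x) - y) - x) = 0 := by
          rw [show ((x + x) - y) - x = -(y - x) by abel, map_neg]
          ring
        have hT1 := htayw y hyB4
        have hT2 := htayw ((x + x) - y) hσyB4
        have hnormeq : ‖((x + x) - y) - x‖ = ‖y - x‖ := by
          rw [show ((x + x) - y) - x = -(y - x) by abel, norm_neg]
        rw [hnormeq] at hT2
        have hmain : |F y + F ((x + x) - y)|
            ≤ (2 * (ε / (2 * (Imin + 1))) * ‖y - x‖ ^ (θ-1) * ‖y - x‖) * |K x y| := by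
          have he2 : F y + F ((x + x) - y)
              = (((uk k y - u y) - (uk k x - u x)
                  - (fderiv ℝ (uk k) x - fderiv ℝ u x) (y - x))
                + ((uk k ((x + x) - y) - u ((x + x) - y)) - (uk k x - u x)
                  - (fderiv ℝ (uk k) x - fderiv ℝ u x) (((x + x) - y) - x)))
                * K x y := by
            rw [hFy, hFσ]
            linear_combination (K x y) * hcancel
          rw [he2, abs_mul]
          refine mul_le_mul_of_nonneg_right ?_ (abs_nonneg _)
          refine (abs_add_le _ _).trans ?_
          calc |(uk k y - u y) - (uk k x - u x)
                - (fderiv ℝ (uk k) x - fderiv ℝ u x) (y - x)|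
              + |(uk k ((x + x) - y) - u ((x + x) - y)) - (uk k x - u x)
                - (fderiv ℝ (uk k) x - fderiv ℝ u x) (((x + x) - y) - x)|
              ≤ (ε / (2 * (Imin + 1))) * ‖y - x‖ ^ (θ-1) * ‖y - x‖
                + (ε / (2 * (Imin + 1))) * ‖y - x‖ ^ (θ-1) * ‖y - x‖ :=
                add_le_add hT1 hT2
            _ = 2 * (ε / (2 * (Imin + 1))) * ‖y - x‖ ^ (θ-1) * ‖y - x‖ := by ring
        refine hmain.trans (le_of_eq ?_)
        rw [show 2 * (ε / (2 * (Imin + 1))) * ‖y - x‖ ^ (θ-1) * ‖y - x‖ * |K x y|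
            = 2 * (ε / (2 * (Imin + 1))) * ((‖y - x‖ ^ (θ-1) * ‖y - x‖) * |K x y|) by ring,
          my_rpow_mul_self (norm_nonneg _) (by linarith : (0:ℝ) < θ),
          norm_sub_rev y x, hmin_near y hy]
      have h2ae : ∫ y in ball x 1, F y
          = (1/2) * ∫ y in ball x 1, (F y + F ((x + x) - y)) := by
        rw [integral_add hint2k hσint, hrefl]
        ring
      rw [h2ae, abs_mul]
      have h3b : |∫ y in ball x 1, (F y + F ((x + x) - y))|
          ≤ 2 * (ε / (2 * (Imin + 1))) * Imin := by
        refine (my_abs_integral _ _).trans ?_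
        calc ∫ y in ball x 1, |F y + F ((x + x) - y)|
            ≤ ∫ y in ball x 1,
                2 * (ε / (2 * (Imin + 1))) * (min (‖x - y‖ ^ θ) 1 * |K x y|) :=
              setIntegral_mono_on (hint2k.add hσint).abs
                ((hKint.const_mul _).integrableOn) measurableSet_ball hsum
          _ = 2 * (ε / (2 * (Imin + 1)))
              * ∫ y in ball x 1, min (‖x - y‖ ^ θ) 1 * |K x y| := integral_const_mul _ _
          _ ≤ 2 * (ε / (2 * (Imin + 1))) * Imin := by
              refine mul_le_mul_of_nonneg_left ?_ (by positivity)
              rw [hImindef]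
              exact setIntegral_le_integral hKint
                (ae_of_all _ (fun y => mul_nonneg (hminnn y) (abs_nonneg _)))
      calc |1/2| * |∫ y in ball x 1, (F y + F ((x + x) - y))|
          ≤ |1/2| * (2 * (ε / (2 * (Imin + 1))) * Imin) :=
            mul_le_mul_of_nonneg_left h3b (abs_nonneg _)
        _ ≤ ε := by
            have hd : (ε / (2 * (Imin + 1))) * (2 * (Imin + 1)) = ε :=
              div_mul_cancel₀ ε (by positivity)
            rw [show |(1:ℝ)/2| = 1/2 by norm_num]
            nlinarith [hεI, hImin0]
  -- integrability on the two outer regions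
  have hint2 : IntegrableOn (fun y => (u x - u y) * K x y)
      (ball (0:En n) 3 \ ball x 1) volume := by
    refine Integrable.mono' (hKA2.const_mul (2 * |M3|)) hgmeas.restrict ?_
    rw [ae_restrict_iff' (measurableSet_ball.diff measurableSet_ball)]
    refine ae_of_all _ (fun y hy => ?_)
    have hy3 : y ∈ closedBall (0:En n) 3 := ball_subset_closedBall hy.1
    rw [Real.norm_eq_abs, abs_mul]
    have h1 : |u x - u y| ≤ 2 * |M3| := by
      have h2 := hM3' x hxcb
      have h3 := hM3' y hy3
      calc |u x - u y| ≤ |u x| + |u y| := my_abs_sub _ _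
        _ ≤ 2 * |M3| := by linarith
    calc |u x - u y| * |K x y| ≤ 2 * |M3| * |K x y| :=
        mul_le_mul_of_nonneg_right h1 (abs_nonneg _)
      _ = _ := rfl
  obtain ⟨k0, hk0⟩ : ∃ k0, (∫⁻ y in (ball (0:En n) 3)ᶜ,
      ENNReal.ofReal (|u y - uk k0 y| * |K x y|)) < ⊤ := by
    have h5 := (htail x hx).eventually_lt_const (show (0:ℝ≥0∞) < 1 by norm_num)
    obtain ⟨k0, hk0⟩ := h5.exists
    exact ⟨k0, lt_of_lt_of_le hk0 le_top⟩
  have hKA3fin : ∫⁻ y in (ball (0:En n) 3)ᶜ, ENNReal.ofReal |K x y| < ⊤ := by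
    have h2 := hKA3.2
    rw [hasFiniteIntegral_iff_norm] at h2
    refine lt_of_eq_of_lt (lintegral_congr (fun y => ?_)) h2
    rw [Real.norm_eq_abs, abs_abs]
  have hint3 : IntegrableOn (fun y => (u x - u y) * K x y) (ball (0:En n) 3)ᶜ volume := by
    refine ⟨hgmeas.restrict, ?_⟩
    rw [hasFiniteIntegral_iff_norm]
    have hpt : ∀ y : En n, ENNReal.ofReal ‖(u x - u y) * K x y‖
        ≤ ENNReal.ofReal (|u x - uk k0 x| * |K x y|)
          + (ENNReal.ofReal |(uk k0 x - uk k0 y) * K x y|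
            + ENNReal.ofReal (|u y - uk k0 y| * |K x y|)) := by
      intro y
      rw [← ENNReal.ofReal_add (by positivity) (by positivity),
        ← ENNReal.ofReal_add (by positivity) (by positivity)]
      apply ENNReal.ofReal_le_ofReal
      rw [Real.norm_eq_abs, abs_mul, abs_mul]
      have h7 : |u x - u y| ≤ |u x - uk k0 x| + (|uk k0 x - uk k0 y| + |u y - uk k0 y|) := by
        have he : u x - u y = (u x - uk k0 x) + ((uk k0 x - uk k0 y) - (u y - uk k0 y)) := by
          ring
        rw [he]
        refine (abs_add_le _ _).trans ?_
        have := my_abs_sub (uk k0 x - uk k0 y) (u y - uk k0 y)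
        linarith
      have h8 := mul_le_mul_of_nonneg_right h7 (abs_nonneg (K x y))
      calc |u x - u y| * |K x y|
          ≤ (|u x - uk k0 x| + (|uk k0 x - uk k0 y| + |u y - uk k0 y|)) * |K x y| := h8
        _ = |u x - uk k0 x| * |K x y|
            + (|uk k0 x - uk k0 y| * |K x y| + |u y - uk k0 y| * |K x y|) := by ring
    calc ∫⁻ y in (ball (0:En n) 3)ᶜ, ENNReal.ofReal ‖(u x - u y) * K x y‖
        ≤ ∫⁻ y in (ball (0:En n) 3)ᶜ, (ENNReal.ofReal (|u x - uk k0 x| * |K x y|)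
          + (ENNReal.ofReal |(uk k0 x - uk k0 y) * K x y|
            + ENNReal.ofReal (|u y - uk k0 y| * |K x y|))) := lintegral_mono hpt
      _ = (∫⁻ y in (ball (0:En n) 3)ᶜ, ENNReal.ofReal (|u x - uk k0 x| * |K x y|))
          + ∫⁻ y in (ball (0:En n) 3)ᶜ, (ENNReal.ofReal |(uk k0 x - uk k0 y) * K x y|
            + ENNReal.ofReal (|u y - uk k0 y| * |K x y|)) :=
        lintegral_add_left' (((hKabs.const_mul _).ennreal_ofReal).restrict) _
      _ = (∫⁻ y in (ball (0:En n) 3)ᶜ, ENNReal.ofReal (|u x - uk k0 x| * |K x y|))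
          + ((∫⁻ y in (ball (0:En n) 3)ᶜ, ENNReal.ofReal |(uk k0 x - uk k0 y) * K x y|)
            + ∫⁻ y in (ball (0:En n) 3)ᶜ, ENNReal.ofReal (|u y - uk k0 y| * |K x y|)) := by
        rw [lintegral_add_right' _ (hFm k0)]
      _ < ⊤ := by
        refine ENNReal.add_lt_top.2 ⟨?_, ENNReal.add_lt_top.2 ⟨?_, hk0⟩⟩
        · have he : ∀ y : En n, ENNReal.ofReal (|u x - uk k0 x| * |K x y|)
              = ENNReal.ofReal |u x - uk k0 x| * ENNReal.ofReal |K x y| := fun y =>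
            ENNReal.ofReal_mul (abs_nonneg _)
          calc ∫⁻ y in (ball (0:En n) 3)ᶜ, ENNReal.ofReal (|u x - uk k0 x| * |K x y|)
              = ∫⁻ y in (ball (0:En n) 3)ᶜ,
                ENNReal.ofReal |u x - uk k0 x| * ENNReal.ofReal |K x y| :=
              lintegral_congr he
            _ = ENNReal.ofReal |u x - uk k0 x|
                * ∫⁻ y in (ball (0:En n) 3)ᶜ, ENNReal.ofReal |K x y| :=
              lintegral_const_mul' _ _ ENNReal.ofReal_ne_top
            _ < ⊤ := ENNReal.mul_lt_top ENNReal.ofReal_lt_top hKA3fin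
        · exact lt_of_le_of_lt (setLIntegral_le_lintegral _ _) (hgklint k0)
  -- global integrability
  have hcompl : (ball x 1)ᶜ ⊆ (ball (0:En n) 3 \ ball x 1) ∪ (ball (0:En n) 3)ᶜ := by
    intro y hy
    by_cases h3 : y ∈ ball (0:En n) 3
    · exact Or.inl ⟨h3, hy⟩
    · exact Or.inr h3
  have hgInt : Integrable (fun y => (u x - u y) * K x y) volume := by
    rw [← integrableOn_univ]
    have h1 : IntegrableOn (fun y => (u x - u y) * K x y) ((ball x 1)ᶜ) volume :=
      (hint2.union hint3).mono_set hcompl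
    refine (hmain1.1.union h1).mono_set ?_
    intro y _
    by_cases h : y ∈ ball x 1
    · exact Or.inl h
    · exact Or.inr h
  refine ⟨hgInt, ?_⟩
  have hkint : ∀ k, Integrable
      (fun y => (u x - u y) * K x y - (uk k x - uk k y) * K x y) volume := by
    intro k
    have h1 := hgInt.sub (heq k x hx).1
    exact h1
  -- decomposition of the integral
  have hsetsplit : (ball x 1)ᶜ = (ball (0:En n) 3 \ ball x 1) ∪ (ball (0:En n) 3)ᶜ := by
    apply Set.Subset.antisymm hcompl
    rintro y (hy | hy)
    · exact hy.2
    · exact fun hc => hy (hbx3 hc)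
  have hdisj : Disjoint (ball (0:En n) 3 \ ball x 1) ((ball (0:En n) 3)ᶜ) :=
    disjoint_compl_right.mono_left Set.diff_subset
  have hsplit : ∀ k, (∫ y, ((u x - u y) * K x y - (uk k x - uk k y) * K x y))
      = (∫ y in ball x 1, ((u x - u y) * K x y - (uk k x - uk k y) * K x y))
        + ((∫ y in ball (0:En n) 3 \ ball x 1,
              ((u x - u y) * K x y - (uk k x - uk k y) * K x y))
          + ∫ y in (ball (0:En n) 3)ᶜ,
              ((u x - u y) * K x y - (uk k x - uk k y) * K x y)) := by
    intro k
    have hI := hkint k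
    rw [← integral_add_compl (measurableSet_ball (x := x) (ε := 1)) hI]
    congr 1
    rw [hsetsplit]
    exact setIntegral_union hdisj measurableSet_ball.compl
      hI.integrableOn hI.integrableOn
  -- the A2 estimate
  have hE2 : ∀ ε : ℝ, 0 < ε → ∀ᶠ k in atTop,
      |∫ y in ball (0:En n) 3 \ ball x 1,
        ((u x - u y) * K x y - (uk k x - uk k y) * K x y)| ≤ ε := by
    intro ε hε
    set IA2 : ℝ := ∫ y in ball (0:En n) 3 \ ball x 1, |K x y| with hIA2def
    have hIA20 : 0 ≤ IA2 :=
      setIntegral_nonneg (measurableSet_ball.diff measurableSet_ball)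
        (fun y _ => abs_nonneg _)
    obtain ⟨N, hN⟩ := hconv0 (ε / (2 * (IA2 + 1))) (by positivity)
    refine eventually_atTop.2 ⟨N, fun k hk => ?_⟩
    have hptw : ∀ y ∈ ball (0:En n) 3 \ ball x 1,
        |(u x - u y) * K x y - (uk k x - uk k y) * K x y|
          ≤ (2 * (ε / (2 * (IA2 + 1)))) * |K x y| := by
      intro y hy
      have h1 := hN k hk x hx4
      have h2 := hN k hk y (hb34 hy.1)
      have he : (u x - u y) * K x y - (uk k x - uk k y) * K x y
          = ((uk k x - u x) - (uk k y - u y)) * (- K x y) := by ring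
      rw [he, abs_mul, abs_neg]
      refine mul_le_mul_of_nonneg_right ?_ (abs_nonneg _)
      calc |(uk k x - u x) - (uk k y - u y)| ≤ |uk k x - u x| + |uk k y - u y| :=
          my_abs_sub _ _
        _ ≤ 2 * (ε / (2 * (IA2 + 1))) := by linarith
    have hIk := (hkint k).integrableOn
      (s := ball (0:En n) 3 \ ball x 1)
    calc |∫ y in ball (0:En n) 3 \ ball x 1,
          ((u x - u y) * K x y - (uk k x - uk k y) * K x y)|
        ≤ ∫ y in ball (0:En n) 3 \ ball x 1,
            |(u x - u y) * K x y - (uk k x - uk k y) * K x y| := my_abs_integral _ _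
      _ ≤ ∫ y in ball (0:En n) 3 \ ball x 1,
            (2 * (ε / (2 * (IA2 + 1)))) * |K x y| :=
          setIntegral_mono_on hIk.abs (hKA2.const_mul _)
            (measurableSet_ball.diff measurableSet_ball) hptw
      _ = (2 * (ε / (2 * (IA2 + 1)))) * IA2 := integral_const_mul _ _
      _ ≤ ε := by
          rw [show (2 * (ε / (2 * (IA2 + 1)))) * IA2 = ε * IA2 / (IA2 + 1) by
            field_simp]
          rw [div_le_iff₀ (by positivity)]
          nlinarith
  -- the A3 estimate
  have hE3 : ∀ ε : ℝ, 0 < ε → ∀ᶠ k in atTop,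
      |∫ y in (ball (0:En n) 3)ᶜ,
        ((u x - u y) * K x y - (uk k x - uk k y) * K x y)| ≤ ε := by
    intro ε hε
    set J : ℝ≥0∞ := ∫⁻ y in (ball (0:En n) 3)ᶜ, ENNReal.ofReal |K x y| with hJdef
    have hJfin : J < ⊤ := hKA3fin
    set ε3 : ℝ := ε / (2 * (J.toReal + 1)) with hε3def
    have hε3pos : 0 < ε3 := by
      have : (0:ℝ) ≤ J.toReal := ENNReal.toReal_nonneg
      positivity
    obtain ⟨N1, hN1⟩ := hconv0 ε3 hε3pos
    have hev2 : ∀ᶠ k in atTop, (∫⁻ y in (ball (0:En n) 3)ᶜ,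
        ENNReal.ofReal (|u y - uk k y| * |K x y|)) ≤ ENNReal.ofReal ε3 :=
      ((htail x hx).eventually_lt_const (ENNReal.ofReal_pos.2 hε3pos)).mono
        (fun k hk => hk.le)
    filter_upwards [hev2, eventually_atTop.2 ⟨N1, fun k hk => hN1 k hk⟩] with k hk2 hk1
    have hpt : ∀ y : En n,
        ENNReal.ofReal ‖(u x - u y) * K x y - (uk k x - uk k y) * K x y‖
        ≤ ENNReal.ofReal (|uk k x - u x| * |K x y|)
          + ENNReal.ofReal (|u y - uk k y| * |K x y|) := by
      intro y
      rw [← ENNReal.ofReal_add (by positivity) (by positivity)]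
      apply ENNReal.ofReal_le_ofReal
      rw [Real.norm_eq_abs]
      have he : (u x - u y) * K x y - (uk k x - uk k y) * K x y
          = ((uk k x - u x) + (u y - uk k y)) * (- K x y) := by ring
      rw [he, abs_mul, abs_neg]
      calc |(uk k x - u x) + (u y - uk k y)| * |K x y|
          ≤ (|uk k x - u x| + |u y - uk k y|) * |K x y| :=
            mul_le_mul_of_nonneg_right (abs_add_le _ _) (abs_nonneg _)
        _ = |uk k x - u x| * |K x y| + |u y - uk k y| * |K x y| := by ring
    have hlin : (∫⁻ y in (ball (0:En n) 3)ᶜ,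
        ENNReal.ofReal ‖(u x - u y) * K x y - (uk k x - uk k y) * K x y‖)
        ≤ ENNReal.ofReal |uk k x - u x| * J + ENNReal.ofReal ε3 := by
      calc (∫⁻ y in (ball (0:En n) 3)ᶜ,
          ENNReal.ofReal ‖(u x - u y) * K x y - (uk k x - uk k y) * K x y‖)
          ≤ ∫⁻ y in (ball (0:En n) 3)ᶜ, (ENNReal.ofReal (|uk k x - u x| * |K x y|)
            + ENNReal.ofReal (|u y - uk k y| * |K x y|)) := lintegral_mono hpt
        _ = (∫⁻ y in (ball (0:En n) 3)ᶜ, ENNReal.ofReal (|uk k x - u x| * |K x y|))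
            + ∫⁻ y in (ball (0:En n) 3)ᶜ, ENNReal.ofReal (|u y - uk k y| * |K x y|) :=
          lintegral_add_left' (((hKabs.const_mul _).ennreal_ofReal).restrict) _
        _ ≤ ENNReal.ofReal |uk k x - u x| * J + ENNReal.ofReal ε3 := by
          refine add_le_add (le_of_eq ?_) hk2
          calc (∫⁻ y in (ball (0:En n) 3)ᶜ, ENNReal.ofReal (|uk k x - u x| * |K x y|))
              = ∫⁻ y in (ball (0:En n) 3)ᶜ,
                ENNReal.ofReal |uk k x - u x| * ENNReal.ofReal |K x y| :=
              lintegral_congr (fun y => ENNReal.ofReal_mul (abs_nonneg _))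
            _ = ENNReal.ofReal |uk k x - u x| * J :=
              lintegral_const_mul' _ _ ENNReal.ofReal_ne_top
    have hRHSne : ENNReal.ofReal |uk k x - u x| * J + ENNReal.ofReal ε3 ≠ ⊤ := by
      refine ENNReal.add_ne_top.2 ⟨?_, ENNReal.ofReal_ne_top⟩
      exact (ENNReal.mul_lt_top ENNReal.ofReal_lt_top hJfin).ne
    have hnorm2 : |∫ y in (ball (0:En n) 3)ᶜ,
        ((u x - u y) * K x y - (uk k x - uk k y) * K x y)|
        ≤ (ENNReal.ofReal |uk k x - u x| * J + ENNReal.ofReal ε3).toReal := by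
      have h9 := norm_integral_le_lintegral_norm
        (μ := volume.restrict (ball (0:En n) 3)ᶜ)
        (fun y => (u x - u y) * K x y - (uk k x - uk k y) * K x y)
      rw [Real.norm_eq_abs] at h9
      exact h9.trans (ENNReal.toReal_mono hRHSne hlin)
    refine hnorm2.trans ?_
    have hxk : |uk k x - u x| ≤ ε3 := hk1 x hx4
    calc (ENNReal.ofReal |uk k x - u x| * J + ENNReal.ofReal ε3).toReal
        = |uk k x - u x| * J.toReal + ε3 := by
          rw [ENNReal.toReal_add ((ENNReal.mul_lt_top ENNReal.ofReal_lt_top hJfin).ne)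
            ENNReal.ofReal_ne_top, ENNReal.toReal_mul,
            ENNReal.toReal_ofReal (abs_nonneg _), ENNReal.toReal_ofReal hε3pos.le]
      _ ≤ ε3 * J.toReal + ε3 :=
          add_le_add (mul_le_mul_of_nonneg_right hxk ENNReal.toReal_nonneg) le_rfl
      _ = ε / 2 := by
          have hj0 : (0:ℝ) < J.toReal + 1 := by positivity
          rw [show ε3 * J.toReal + ε3 = ε3 * (J.toReal + 1) by ring, hε3def,
            div_mul_eq_mul_div, mul_div_mul_right _ _ (ne_of_gt hj0)]
      _ ≤ ε := by linarith
  -- convergence of the error terms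
  have hTend : Tendsto (fun k => ∫ y,
      ((u x - u y) * K x y - (uk k x - uk k y) * K x y)) atTop (nhds 0) := by
    rw [Metric.tendsto_atTop]
    intro ε hε
    have e1 := hmain1.2 (ε/4) (by positivity)
    have e2 := hE2 (ε/4) (by positivity)
    have e3 := hE3 (ε/4) (by positivity)
    obtain ⟨N, hN⟩ := eventually_atTop.1 ((e1.and e2).and e3)
    refine ⟨N, fun k hk => ?_⟩
    obtain ⟨⟨h1, h2⟩, h3⟩ := hN k hk
    rw [Real.dist_eq, sub_zero, hsplit k]
    calc |(∫ y in ball x 1, ((u x - u y) * K x y - (uk k x - uk k y) * K x y))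
          + ((∫ y in ball (0:En n) 3 \ ball x 1,
              ((u x - u y) * K x y - (uk k x - uk k y) * K x y))
            + ∫ y in (ball (0:En n) 3)ᶜ,
              ((u x - u y) * K x y - (uk k x - uk k y) * K x y))|
        ≤ |∫ y in ball x 1, ((u x - u y) * K x y - (uk k x - uk k y) * K x y)|
          + (|∫ y in ball (0:En n) 3 \ ball x 1,
              ((u x - u y) * K x y - (uk k x - uk k y) * K x y)|
            + |∫ y in (ball (0:En n) 3)ᶜ,
              ((u x - u y) * K x y - (uk k x - uk k y) * K x y)|) :=
          (abs_add_le _ _).trans (add_le_add_right (abs_add_le _ _) _)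
      _ ≤ ε/4 + (ε/4 + ε/4) := add_le_add h1 (add_le_add h2 h3)
      _ < ε := by linarith
  have hfx : Tendsto (fun k => fk k x) atTop (nhds (f x)) := hfconv.tendsto_at hx
  have heqk : ∀ k, opA K u x = fk k x
      + ∫ y, ((u x - u y) * K x y - (uk k x - uk k y) * K x y) := by
    intro k
    have h1 : (fun y => (u x - u y) * K x y) = fun y => (uk k x - uk k y) * K x y
        + ((u x - u y) * K x y - (uk k x - uk k y) * K x y) := by
      funext y; ring
    show (∫ y, (u x - u y) * K x y) = _
    rw [h1, integral_add (heq k x hx).1 (hkint k)]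
    congr 1
    exact (heq k x hx).2
  have hfinal : Tendsto (fun _ : ℕ => opA K u x) atTop (nhds (f x + 0)) := by
    refine Tendsto.congr (fun k => (heqk k).symm) (hfx.add hTend)
  have h10 := tendsto_nhds_unique tendsto_const_nhds hfinal
  rw [add_zero] at h10
  exact h10
end

section
/- Let s ∈ (0,1) and, for each integer k ≥ 2, define u_k : ℝ → ℝ by u_k(x) := −x^{2s}/log k if x ∈ (k, k²) and u_k(x) := 0 otherwise, and set f_k(x) := ∫_ℝ (u_k(x) − u_k(y)) |x−y|^{−1−2s} dy for x ∈ (−1,1). Then for every x ∈ (−1,1) one has k^{1+2s}/(k+1)^{1+2s} ≤ f_k(x) ≤ k^{1+2s}/(k−1)^{1+2s}. In particular f_k converges to the constant function 1 uniformly on (−1,1), even though u_k converges to 0 locally uniformly on ℝ. -/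
open MeasureTheory Metric Filter
open scoped ENNReal NNReal

section Helpers

open MeasureTheory Filter


lemma pow_id' (s y w : ℝ) (hy : 0 < y) (hw : 0 < w) :
    y ^ (2*s) * w ^ (-(1:ℝ) - 2*s) = (y/w) ^ (1+2*s) * y⁻¹ := by
  rw [Real.div_rpow hy.le hw.le, show -(1:ℝ)-2*s = -(1+2*s) by ring,
    Real.rpow_neg hw.le, Real.rpow_add hy, Real.rpow_one]
  field_simp

lemma int_inv' (a b : ℝ) (ha : 0 < a) (hab : a ≤ b) :
    ∫ y in Set.Ioo a b, y⁻¹ = Real.log (b / a) := by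
  rw [← integral_Ioc_eq_integral_Ioo, ← intervalIntegral.integral_of_le hab, integral_inv]
  intro h
  rw [Set.mem_uIcc] at h
  rcases h with ⟨h1,_⟩|⟨h1,_⟩ <;> linarith

lemma bounds_main (s : ℝ) (hs : s ∈ Set.Ioo (0 : ℝ) 1)
    (u : ℕ → ℝ → ℝ)
    (hu : ∀ k : ℕ, ∀ x : ℝ,
        u k x = if x ∈ Set.Ioo (k : ℝ) ((k : ℝ) ^ 2) then -(x ^ (2 * s)) / Real.log k else 0)
    (f : ℕ → ℝ → ℝ)
    (hf : ∀ k : ℕ, ∀ x ∈ Set.Ioo (-1 : ℝ) 1,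
        f k x = ∫ y : ℝ, (u k x - u k y) * |x - y| ^ (-(1 : ℝ) - 2 * s))
    (k : ℕ) (hk : 2 ≤ k) (x : ℝ) (hx : x ∈ Set.Ioo (-1 : ℝ) 1) :
    (k : ℝ) ^ (1 + 2 * s) / ((k : ℝ) + 1) ^ (1 + 2 * s) ≤ f k x ∧
      f k x ≤ (k : ℝ) ^ (1 + 2 * s) / ((k : ℝ) - 1) ^ (1 + 2 * s) := by
  obtain ⟨hx1, hx2⟩ := hx
  have hs0 : 0 < s := hs.1
  have hk2 : (2:ℝ) ≤ (k:ℝ) := by exact_mod_cast hk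
  set K : ℝ := (k : ℝ) with hK
  have hKsq : K < K ^ 2 := by nlinarith
  have hlog : 0 < Real.log K := Real.log_pos (by linarith)
  have hux : u k x = 0 := by
    rw [hu]; exact if_neg (fun h => absurd h.1 (by push_neg; linarith))
  -- rewrite f k x as a set integral
  have hrw : f k x = ∫ y in Set.Ioo K (K^2), (y ^ (2*s) / Real.log K) * (y - x) ^ (-(1:ℝ) - 2*s) := by
    rw [hf k x ⟨hx1, hx2⟩, ← integral_indicator measurableSet_Ioo]
    congr 1
    funext y
    by_cases hy : y ∈ Set.Ioo K (K^2)
    · rw [Set.indicator_of_mem hy, hu k y, if_pos (show y ∈ Set.Ioo ((k:ℝ)) ((k:ℝ)^2) from hy), hux]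
      have : |x - y| = y - x := by
        rw [abs_of_neg (by linarith [hy.1])]; ring
      rw [this]; ring
    · rw [Set.indicator_of_notMem hy, hu k y, if_neg (show y ∉ Set.Ioo ((k:ℝ)) ((k:ℝ)^2) from hy), hux]
      ring
  set c1 : ℝ := (K / (K + 1)) ^ (1 + 2*s) with hc1
  set c2 : ℝ := (K / (K - 1)) ^ (1 + 2*s) with hc2
  have hbnd : ∀ y ∈ Set.Ioo K (K^2),
      c1 * y⁻¹ ≤ y ^ (2*s) * (y - x) ^ (-(1:ℝ) - 2*s) ∧
      y ^ (2*s) * (y - x) ^ (-(1:ℝ) - 2*s) ≤ c2 * y⁻¹ := by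
    intro y hy
    have hy0 : 0 < y := by linarith [hy.1]
    have hyx : 0 < y - x := by linarith [hy.1]
    have hy1 : 0 < y - 1 := by linarith [hy.1]
    have hyp : 0 < y + 1 := by linarith
    have hexp : (0:ℝ) ≤ 1 + 2*s := by linarith
    constructor
    · calc c1 * y⁻¹ ≤ (y / (y + 1)) ^ (1 + 2*s) * y⁻¹ := by
            apply mul_le_mul_of_nonneg_right _ (inv_nonneg.2 hy0.le)
            apply Real.rpow_le_rpow (by positivity) _ hexp
            rw [div_le_div_iff₀ (by linarith) hyp]
            nlinarith [hy.1]
          _ = y ^ (2*s) * (y + 1) ^ (-(1:ℝ) - 2*s) := (pow_id' s y (y+1) hy0 hyp).symm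
          _ ≤ y ^ (2*s) * (y - x) ^ (-(1:ℝ) - 2*s) := by
            apply mul_le_mul_of_nonneg_left _ (Real.rpow_nonneg hy0.le _)
            exact Real.rpow_le_rpow_of_nonpos hyx (by linarith) (by linarith)
    · calc y ^ (2*s) * (y - x) ^ (-(1:ℝ) - 2*s)
            ≤ y ^ (2*s) * (y - 1) ^ (-(1:ℝ) - 2*s) := by
            apply mul_le_mul_of_nonneg_left _ (Real.rpow_nonneg hy0.le _)
            exact Real.rpow_le_rpow_of_nonpos hy1 (by linarith) (by linarith)
          _ = (y / (y - 1)) ^ (1 + 2*s) * y⁻¹ := pow_id' s y (y-1) hy0 hy1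
          _ ≤ c2 * y⁻¹ := by
            apply mul_le_mul_of_nonneg_right _ (inv_nonneg.2 hy0.le)
            apply Real.rpow_le_rpow (by positivity) _ hexp
            rw [div_le_div_iff₀ hy1 (by linarith)]
            nlinarith [hy.1]
  -- integrability
  have hIcont : ContinuousOn (fun y : ℝ => y ^ (2*s) * (y - x) ^ (-(1:ℝ) - 2*s)) (Set.Icc K (K^2)) := by
    apply ContinuousOn.mul
    · exact ContinuousOn.rpow_const continuousOn_id (fun y hy => Or.inl (ne_of_gt (by nlinarith [hy.1])))
    · exact ContinuousOn.rpow_const (continuousOn_id.sub continuousOn_const)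
        (fun y hy => Or.inl (ne_of_gt (show (0:ℝ) < y - x by nlinarith [hy.1])))
  have hI : IntegrableOn (fun y : ℝ => y ^ (2*s) * (y - x) ^ (-(1:ℝ) - 2*s)) (Set.Ioo K (K^2)) :=
    (hIcont.integrableOn_Icc).mono_set Set.Ioo_subset_Icc_self
  have hinv : IntegrableOn (fun y : ℝ => y⁻¹) (Set.Ioo K (K^2)) := by
    apply (ContinuousOn.integrableOn_Icc _).mono_set Set.Ioo_subset_Icc_self
    exact ContinuousOn.inv₀ continuousOn_id (fun y hy => ne_of_gt (show (0:ℝ) < y by nlinarith [hy.1]))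
  have hinvint : ∫ y in Set.Ioo K (K^2), y⁻¹ = Real.log K := by
    rw [int_inv' K (K^2) (by linarith) hKsq.le]
    congr 1
    field_simp [sq]
  set I : ℝ := ∫ y in Set.Ioo K (K^2), y ^ (2*s) * (y - x) ^ (-(1:ℝ) - 2*s) with hIdef
  have hlow : c1 * Real.log K ≤ I := by
    rw [← hinvint, ← integral_const_mul]
    exact setIntegral_mono_on (hinv.const_mul c1) hI measurableSet_Ioo (fun y hy => (hbnd y hy).1)
  have hhigh : I ≤ c2 * Real.log K := by
    rw [← hinvint, ← integral_const_mul]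
    exact setIntegral_mono_on hI (hinv.const_mul c2) measurableSet_Ioo (fun y hy => (hbnd y hy).2)
  have hfI : f k x = I / Real.log K := by
    rw [hrw, div_eq_inv_mul, ← integral_const_mul]
    congr 1; funext y; ring
  have hc1' : c1 = K ^ (1 + 2*s) / (K + 1) ^ (1 + 2*s) :=
    Real.div_rpow (by linarith) (by linarith) _
  have hc2' : c2 = K ^ (1 + 2*s) / (K - 1) ^ (1 + 2*s) :=
    Real.div_rpow (by linarith) (by linarith) _
  rw [hfI, ← hc1', ← hc2']
  constructor
  · rw [le_div_iff₀ hlog]; exact hlow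
  · rw [div_le_iff₀ hlog]; exact hhigh

lemma conv1 (s : ℝ) (hs0 : 0 < s) :
    Tendsto (fun k : ℕ => (k : ℝ) ^ (1 + 2*s) / ((k : ℝ) + 1) ^ (1 + 2*s)) atTop (nhds 1) := by
  have h0 : Tendsto (fun k : ℕ => (k : ℝ) / ((k : ℝ) + 1)) atTop (nhds 1) := by
    have : Tendsto (fun n : ℕ => 1 / ((n : ℝ) + 1)) atTop (nhds 0) := tendsto_one_div_add_atTop_nhds_zero_nat
    have h : Tendsto (fun k : ℕ => 1 - 1/((k:ℝ)+1)) atTop (nhds 1) := by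
      have h2 := (tendsto_const_nhds (x := (1:ℝ)) (f := atTop (α := ℕ))).sub this
      rw [sub_zero] at h2
      exact h2
    apply h.congr
    intro k
    have : (k:ℝ) + 1 ≠ 0 := by positivity
    field_simp; ring
  have h1 := h0.rpow_const (p := 1 + 2*s) (Or.inr (by linarith))
  rw [Real.one_rpow] at h1
  apply h1.congr
  intro k
  exact Real.div_rpow (Nat.cast_nonneg k) (by positivity) _

lemma conv2 (s : ℝ) (hs0 : 0 < s) :
    Tendsto (fun k : ℕ => (k : ℝ) ^ (1 + 2*s) / ((k : ℝ) - 1) ^ (1 + 2*s)) atTop (nhds 1) := by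
  have h0 : Tendsto (fun k : ℕ => (k : ℝ) / ((k : ℝ) - 1)) atTop (nhds 1) := by
    have hd : Tendsto (fun k : ℕ => (k : ℝ) - 1) atTop atTop := by
      have := tendsto_atTop_add_const_right atTop (-1) (tendsto_natCast_atTop_atTop (R := ℝ))
      apply this.congr
      intro k; ring
    have h : Tendsto (fun k : ℕ => 1 + ((k:ℝ)-1)⁻¹) atTop (nhds 1) := by
      have h2 := (tendsto_const_nhds (x := (1:ℝ)) (f := atTop (α := ℕ))).add hd.inv_tendsto_atTop
      rw [add_zero] at h2
      exact h2
    apply h.congr'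
    filter_upwards [eventually_ge_atTop 2] with k hk
    have : (k:ℝ) - 1 ≠ 0 := by
      have : (2:ℝ) ≤ (k:ℝ) := by exact_mod_cast hk
      linarith
    field_simp; ring
  have h1 := h0.rpow_const (p := 1 + 2*s) (Or.inr (by linarith))
  rw [Real.one_rpow] at h1
  apply h1.congr'
  filter_upwards [eventually_ge_atTop 1] with k hk
  have : (0:ℝ) ≤ (k:ℝ) - 1 := by
    have : (1:ℝ) ≤ (k:ℝ) := by exact_mod_cast hk
    linarith
  exact Real.div_rpow (Nat.cast_nonneg k) this _

end Helpers

/-- the counterexample in the footnote of Lemma `lemCS`. -/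
theorem statement_4 (s : ℝ) (hs : s ∈ Set.Ioo (0 : ℝ) 1)
    (u : ℕ → ℝ → ℝ)
    (hu : ∀ k : ℕ, ∀ x : ℝ,
        u k x = if x ∈ Set.Ioo (k : ℝ) ((k : ℝ) ^ 2) then -(x ^ (2 * s)) / Real.log k else 0)
    (f : ℕ → ℝ → ℝ)
    (hf : ∀ k : ℕ, ∀ x ∈ Set.Ioo (-1 : ℝ) 1,
        f k x = ∫ y : ℝ, (u k x - u k y) * |x - y| ^ (-(1 : ℝ) - 2 * s)) :
    (∀ k : ℕ, 2 ≤ k → ∀ x ∈ Set.Ioo (-1 : ℝ) 1,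
        (k : ℝ) ^ (1 + 2 * s) / ((k : ℝ) + 1) ^ (1 + 2 * s) ≤ f k x ∧
          f k x ≤ (k : ℝ) ^ (1 + 2 * s) / ((k : ℝ) - 1) ^ (1 + 2 * s)) ∧
    TendstoUniformlyOn (fun k => f k) (fun _ => (1 : ℝ)) atTop (Set.Ioo (-1 : ℝ) 1) ∧
    TendstoLocallyUniformly (fun k => u k) (fun _ => (0 : ℝ)) atTop := by

  refine ⟨fun k hk x hx => bounds_main s hs u hu f hf k hk x hx, ?_, ?_⟩
  · rw [Metric.tendstoUniformlyOn_iff]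
    intro ε hε
    have h1 := (Metric.tendsto_nhds.mp (conv1 s hs.1)) ε hε
    have h2 := (Metric.tendsto_nhds.mp (conv2 s hs.1)) ε hε
    filter_upwards [h1, h2, eventually_ge_atTop 2] with k hd1 hd2 hk
    intro x hx
    obtain ⟨hl, hr⟩ := bounds_main s hs u hu f hf k hk x hx
    rw [Real.dist_eq] at hd1 hd2 ⊢
    rw [abs_lt] at hd1 hd2 ⊢
    constructor <;> linarith [hd1.1, hd1.2, hd2.1, hd2.2]
  · rw [Metric.tendstoLocallyUniformly_iff]
    intro ε hε x
    refine ⟨Metric.ball x 1, Metric.ball_mem_nhds x one_pos, ?_⟩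
    obtain ⟨N, hN⟩ := exists_nat_ge (x + 1)
    filter_upwards [eventually_ge_atTop N] with k hk y hy
    have hNk : (N:ℝ) ≤ (k:ℝ) := by exact_mod_cast hk
    have hdy : |y - x| < 1 := by rw [← Real.dist_eq]; exact Metric.mem_ball.mp hy
    rw [abs_lt] at hdy
    have hyk : y < (k:ℝ) := by linarith [hdy.2]
    have hz : u k y = 0 := by
      rw [hu]; exact if_neg (fun h => absurd h.1 (by linarith))
    simpa [hz] using hε
end

section
/- Let n ≥ 1, m ∈ ℕ₀, θ ∈ [0,2], K ∈ 𝒦_{m,θ} and u ∈ 𝒞_{θ,K}. Let f₁ and f₂ be bounded and continuous on B₁ and suppose that Au ≐_m f₁ and Au ≐_m f₂ in B₁. Then there exists a polynomial P on ℝⁿ of degree at most m−1 such that f₁ − f₂ = P on B₁. -/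
open MeasureTheory Metric Filter
open scoped ENNReal NNReal

/-- Lemma `lemma:uniq`: uniqueness of `f` up to polynomials. -/
theorem statement_8 {n : ℕ} (hn : 1 ≤ n) (m : ℕ) (θ : ℝ) (hθ : θ ∈ Set.Icc (0 : ℝ) 2)
    (K : En n → En n → ℝ) (hK : memKclass n m θ K)
    (u : En n → ℝ) (hu : memCthetaK n m θ K u)
    (f₁ f₂ : En n → ℝ) (hf₁ : BddContOn n f₁) (hf₂ : BddContOn n f₂)
    (h₁ : AeqPoly n m K u f₁) (h₂ : AeqPoly n m K u f₂) :
    ∃ P : En n → ℝ, IsPolyDegLt n m P ∧ ∀ x ∈ ball (0 : En n) 1, f₁ x - f₂ x = P x := by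
  classical
  obtain ⟨P₁, g₁, hP₁, he₁, ht₁⟩ := h₁
  obtain ⟨P₂, g₂, hP₂, he₂, ht₂⟩ := h₂
  set S : Set (En n) := ball (0 : En n) 1 with hS
  -- The linear map from coefficient vectors to functions on the ball
  let Φ : (↥(multiIdxLt n m) → ℝ) →ₗ[ℝ] (↥S → ℝ) :=
  { toFun := fun c x =>
      ∑ α : ↥(multiIdxLt n m), c α * ∏ i, (x : En n) i ^ (α : Fin n → ℕ) i
    map_add' := by
      intro a b; funext x
      simp [add_mul, Finset.sum_add_distrib]
    map_smul' := by
      intro r a; funext x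
      simp [Finset.mul_sum, mul_assoc] }
  have hclosed : IsClosed ((LinearMap.range Φ : Submodule ℝ (↥S → ℝ)) : Set (↥S → ℝ)) :=
    Submodule.closed_of_finiteDimensional _
  let G : ℝ → (↥S → ℝ) := fun R x => P₂ R x - P₁ R x
  let L : ↥S → ℝ := fun x => f₁ x - f₂ x
  have hmem : ∀ᶠ R in atTop, G R ∈ (LinearMap.range Φ : Submodule ℝ (↥S → ℝ)) := by
    filter_upwards [eventually_gt_atTop (3 : ℝ)] with R hR
    obtain ⟨c₁, hc₁⟩ := hP₁ R hR
    obtain ⟨c₂, hc₂⟩ := hP₂ R hR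
    refine ⟨fun α => c₂ α - c₁ α, ?_⟩
    funext x
    show ∑ α : ↥(multiIdxLt n m),
        (c₂ (α : Fin n → ℕ) - c₁ (α : Fin n → ℕ)) * ∏ i, (x : En n) i ^ (α : Fin n → ℕ) i
      = P₂ R x - P₁ R x
    rw [hc₁, hc₂, ← Finset.sum_sub_distrib, ← Finset.sum_coe_sort (multiIdxLt n m)
      (fun α => c₂ α * ∏ i, (x : En n) i ^ α i - c₁ α * ∏ i, (x : En n) i ^ α i)]
    exact Finset.sum_congr rfl (fun α _ => sub_mul _ _ _)
  have htend : Tendsto G atTop (nhds L) := by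
    rw [tendsto_pi_nhds]
    intro x
    have hx : (x : En n) ∈ ball (0 : En n) 1 := x.2
    have h := (ht₁ x hx).sub (ht₂ x hx)
    refine h.congr' ?_
    filter_upwards [eventually_gt_atTop (3 : ℝ)] with R hR
    have e₁ := he₁ R hR x hx
    have e₂ := he₂ R hR x hx
    show g₁ R x - g₂ R x = P₂ R x - P₁ R x
    linarith [e₁, e₂]
  have hL : L ∈ (LinearMap.range Φ : Submodule ℝ (↥S → ℝ)) :=
    hclosed.mem_of_tendsto htend hmem
  obtain ⟨c, hc⟩ := hL
  classical
  refine ⟨fun x => ∑ α ∈ multiIdxLt n m,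
      (if h : α ∈ multiIdxLt n m then c ⟨α, h⟩ else 0) * ∏ i, x i ^ α i,
    ⟨fun α => if h : α ∈ multiIdxLt n m then c ⟨α, h⟩ else 0, fun x => rfl⟩, ?_⟩
  intro x hx
  have hcx : Φ c ⟨x, hx⟩ = f₁ x - f₂ x := congrFun hc ⟨x, hx⟩
  rw [← hcx]
  show (∑ α : ↥(multiIdxLt n m), c α * ∏ i, x i ^ (α : Fin n → ℕ) i)
    = ∑ α ∈ multiIdxLt n m, (if h : α ∈ multiIdxLt n m then c ⟨α, h⟩ else 0) * ∏ i, x i ^ α i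
  rw [← Finset.sum_coe_sort (multiIdxLt n m)
    (fun α => (if h : α ∈ multiIdxLt n m then c ⟨α, h⟩ else 0) * ∏ i, x i ^ α i)]
  refine Finset.sum_congr rfl (fun α _ => ?_)
  rw [dif_pos α.2]
end
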